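/- arXiv:math/0311079 — 8 statements merged into one kernel-verified Lean document; each statement's English description precedes it below -/
import Mathlib

section
/- For all ε₀, ε ∈ ℰ, the following identity holds in the field of rational functions ℚ(λ_1, …, λ_N): the sum over all ε' ∈ ℰ with ε' ≤ ε of σ_{ε₀}(ε') / (Π_{i∈π₊(ε)} λ_i(ε')) equals 1 if ε₀ = ε, and equals 0 otherwise. (This orthogonality identity is the combinatorial content of the theorem that the functions σ_ε are the restrictions to the fixed points of the equivariant cohomology basis {σ̂^D_ε} of a Bott tower, characterized by ∫_{Ȳ_{ε'}} σ̂^D_ε = δ_{ε',ε} via the localization formula.) -/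
open MvPolynomial

/-- Product of the values `c a b` along consecutive entries of a list. -/
def pathProd {N : ℕ} (c : Fin N → Fin N → ℤ) : List (Fin N) → ℤ
  | [] => 1
  | [_] => 1
  | a :: b :: t => c a b * pathProd c (b :: t)

/-- `c_{k,l}(ε) = Σ (−1)^m c_{i_0,i_1}c_{i_1,i_2}⋯c_{i_{m−1},i_m}`, the sum over all
chains `k = i_0 < i_1 < ⋯ < i_m = l` with `m ≥ 1` all of whose intermediate indices
lie in `π₊(ε)` (a chain is identified with the set `S` of its intermediate indices,
and `m = S.card + 1`). -/
def chainC {N : ℕ} (c : Fin N → Fin N → ℤ) (ε : Fin N → Bool) (k l : Fin N) : ℤ :=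
  ∑ S ∈ (Finset.univ.filter (fun j => k < j ∧ j < l ∧ ε j = true)).powerset,
    (-1) ^ (S.card + 1) * pathProd c (k :: (S.sort (· ≤ ·) ++ [l]))

/-- The linear form `λ_i(ε) = (−1)^{ε_i+1}(λ_i + Σ_{j<i, j∈π₊(ε)} c_{j,i}(ε)λ_j)`
in `ℚ[λ_1,…,λ_N]`, where `λ_j` is the variable `X j`. -/
noncomputable def lamP {N : ℕ} (c : Fin N → Fin N → ℤ) (ε : Fin N → Bool) (i : Fin N) :
    MvPolynomial (Fin N) ℚ :=
  (if ε i then 1 else -1) *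
    (X i + ∑ j ∈ Finset.univ.filter (fun j => j < i ∧ ε j = true),
        C ((chainC c ε j i : ℤ) : ℚ) * X j)

/-- `σ_ε(ε') = Π_{i∈π₊(ε)} λ_i(ε')` if `ε ≤ ε'`, and `0` otherwise. -/
noncomputable def sigmaP {N : ℕ} (c : Fin N → Fin N → ℤ) (ε ε' : Fin N → Bool) :
    MvPolynomial (Fin N) ℚ :=
  if ∀ i, ε i = true → ε' i = true then
    ∏ i ∈ Finset.univ.filter (fun i => ε i = true), lamP c ε' i
  else 0


lemma lamP_ne_zero {N : ℕ} (c : Fin N → Fin N → ℤ) (ε : Fin N → Bool) (i : Fin N) :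
    lamP c ε i ≠ 0 := by
  intro h
  have h2 := congrArg (eval (fun k => if k = i then (1:ℚ) else 0)) h
  simp only [lamP, eval_mul, eval_add, eval_X, eval_sum, eval_mul, eval_C, map_zero,
    if_pos rfl, apply_ite (eval (fun k => if k = i then (1:ℚ) else 0)), map_one, map_neg] at h2
  rw [Finset.sum_eq_zero (fun j hj => by
      simp only [Finset.mem_filter] at hj
      rw [if_neg (ne_of_lt hj.2.1)]; ring)] at h2
  rcases Bool.eq_false_or_eq_true (ε i) with hb | hb <;> simp [hb] at h2

lemma chainC_update {N : ℕ} (c : Fin N → Fin N → ℤ) (ε : Fin N → Bool) {i t : Fin N}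
    (h : i ≤ t) (b : Bool) (k : Fin N) :
    chainC c (Function.update ε t b) k i = chainC c ε k i := by
  unfold chainC
  have hf : (Finset.univ.filter (fun j => k < j ∧ j < i ∧ Function.update ε t b j = true))
      = Finset.univ.filter (fun j => k < j ∧ j < i ∧ ε j = true) := by
    apply Finset.filter_congr
    intro x _
    by_cases hx : x = t
    · subst hx
      constructor <;> rintro ⟨h1, h2, h3⟩ <;> exact absurd h2 (not_lt.2 h)
    · rw [Function.update_of_ne hx]
  rw [hf]

lemma lamP_update_lt {N : ℕ} (c : Fin N → Fin N → ℤ) (ε : Fin N → Bool) {i t : Fin N}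
    (h : i < t) (b : Bool) :
    lamP c (Function.update ε t b) i = lamP c ε i := by
  unfold lamP
  rw [Function.update_of_ne (ne_of_lt h)]
  congr 1
  have hf : (Finset.univ.filter (fun j => j < i ∧ Function.update ε t b j = true))
      = Finset.univ.filter (fun j => j < i ∧ ε j = true) := by
    apply Finset.filter_congr
    intro x _
    by_cases hx : x = t
    · subst hx
      constructor <;> rintro ⟨h1, h2⟩ <;> exact absurd h1 (not_lt.2 (le_of_lt h))
    · rw [Function.update_of_ne hx]
  rw [hf]
  apply congrArg
  apply Finset.sum_congr rfl
  intro j _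
  rw [chainC_update c ε (le_of_lt h) b]

lemma lamP_update_self {N : ℕ} (c : Fin N → Fin N → ℤ) (ε : Fin N → Bool) (t : Fin N) :
    lamP c (Function.update ε t (!ε t)) t = - lamP c ε t := by
  unfold lamP
  rw [Function.update_self]
  have hf : (Finset.univ.filter (fun j => j < t ∧ Function.update ε t (!ε t) j = true))
      = Finset.univ.filter (fun j => j < t ∧ ε j = true) := by
    apply Finset.filter_congr
    intro x _
    by_cases hx : x = t
    · subst hx
      constructor <;> rintro ⟨h1, h2⟩ <;> exact absurd h1 (lt_irrefl x)
    · rw [Function.update_of_ne hx]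
  rw [hf, ← neg_mul]
  congr 1
  · cases hb : ε t <;> simp [hb]
  · apply congrArg
    apply Finset.sum_congr rfl
    intro j _
    rw [chainC_update c ε (le_refl t) (!ε t)]

lemma map_lamP_ne_zero {N : ℕ} (c : Fin N → Fin N → ℤ) (ε : Fin N → Bool) (i : Fin N) :
    algebraMap (MvPolynomial (Fin N) ℚ) (FractionRing (MvPolynomial (Fin N) ℚ))
      (lamP c ε i) ≠ 0 :=
  (map_ne_zero_iff _ (IsFractionRing.injective _ _)).mpr (lamP_ne_zero c ε i)


/-- Orthogonality identity in the field of rational functions `ℚ(λ_1,…,λ_N)`: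
for all `ε₀, ε ∈ ℰ`, the sum over all `ε' ≤ ε` of
`σ_{ε₀}(ε') / Π_{i∈π₊(ε)} λ_i(ε')` equals `1` if `ε₀ = ε` and `0` otherwise.
This is the combinatorial content of the fact that the `σ_ε` are the fixed-point
restrictions of the equivariant cohomology basis of a Bott tower. -/
theorem sigma_orthogonality {N : ℕ} (hN : 1 ≤ N) (c : Fin N → Fin N → ℤ)
    (ε₀ ε : Fin N → Bool) :
    (∑ ε' ∈ Finset.univ.filter (fun ε' : Fin N → Bool => ∀ i, ε' i = true → ε i = true),
        algebraMap (MvPolynomial (Fin N) ℚ) (FractionRing (MvPolynomial (Fin N) ℚ))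
            (sigmaP c ε₀ ε')
          / ∏ i ∈ Finset.univ.filter (fun i => ε i = true),
              algebraMap (MvPolynomial (Fin N) ℚ) (FractionRing (MvPolynomial (Fin N) ℚ))
                (lamP c ε' i))
      = if ε₀ = ε then 1 else 0 := by
  classical
  set φ := algebraMap (MvPolynomial (Fin N) ℚ) (FractionRing (MvPolynomial (Fin N) ℚ)) with hφ
  by_cases h0 : ε₀ = ε
  · subst h0
    rw [if_pos rfl]
    rw [Finset.sum_eq_single_of_mem ε₀
      (Finset.mem_filter.2 ⟨Finset.mem_univ _, fun i h => h⟩)]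
    · rw [show sigmaP c ε₀ ε₀ = ∏ i ∈ Finset.univ.filter (fun i => ε₀ i = true), lamP c ε₀ i
        from if_pos (fun i h => h)]
      rw [map_prod]
      exact div_self (Finset.prod_ne_zero_iff.2 fun i _ => map_lamP_ne_zero c ε₀ i)
    · intro b hb hbne
      rw [show sigmaP c ε₀ b = 0 from if_neg ?_, map_zero, zero_div]
      intro hall
      apply hbne
      have hble := (Finset.mem_filter.1 hb).2
      funext i
      cases hbi : b i with
      | true => exact (hble i hbi).symm ▸ rfl
      | false =>
        cases hεi : ε₀ i with
        | false => rfl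
        | true => exact absurd (hall i hεi) (by rw [hbi]; simp)
  · rw [if_neg h0]
    by_cases hle : ∀ i, ε₀ i = true → ε i = true
    · -- ε₀ < ε strictly: pairing argument
      set T : Finset (Fin N) := Finset.univ.filter (fun i => ε i = true ∧ ε₀ i = false)
        with hT
      have hTne : T.Nonempty := by
        have : ∃ i, ε₀ i ≠ ε i := Function.ne_iff.1 h0
        obtain ⟨i, hi⟩ := this
        refine ⟨i, Finset.mem_filter.2 ⟨Finset.mem_univ _, ?_, ?_⟩⟩
        · cases hεi : ε i with
          | true => rfl
          | false =>
            cases hε₀i : ε₀ i with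
            | false => exact absurd (hε₀i.trans hεi.symm) hi
            | true => exact (hεi ▸ hle i hε₀i)
        · cases hε₀i : ε₀ i with
          | false => rfl
          | true => exact absurd (hε₀i.trans (hle i hε₀i).symm) hi
      set t := T.max' hTne with ht
      have htT : t ∈ T := T.max'_mem hTne
      have hεt : ε t = true := (Finset.mem_filter.1 htT).2.1
      have hε₀t : ε₀ t = false := (Finset.mem_filter.1 htT).2.2
      apply Finset.sum_involution (fun a _ => Function.update a t (!a t))
      · -- pair cancellation
        intro a ha
        have haε : ∀ i, a i = true → ε i = true := (Finset.mem_filter.1 ha).2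
        set u := Function.update a t (!a t) with hu
        have huε : ∀ i, u i = true → ε i = true := by
          intro i hi
          by_cases hit : i = t
          · exact hit ▸ hεt
          · exact haε i (by rwa [hu, Function.update_of_ne hit] at hi)
        have hcond : (∀ i, ε₀ i = true → u i = true) ↔ (∀ i, ε₀ i = true → a i = true) := by
          constructor <;> intro hc i hi <;>
            have hit : i ≠ t := fun h => by rw [h, hε₀t] at hi; exact Bool.noConfusion hi
          · have := hc i hi; rwa [hu, Function.update_of_ne hit] at this
          · rw [hu, Function.update_of_ne hit]; exact hc i hi
        by_cases hc : ∀ i, ε₀ i = true → a i = true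
        · -- both nonzero, cancel
          have key : ∀ (b : Fin N → Bool), (∀ i, ε₀ i = true → b i = true) →
              φ (sigmaP c ε₀ b) / ∏ i ∈ Finset.univ.filter (fun i => ε i = true),
                φ (lamP c b i)
              = (∏ i ∈ T, φ (lamP c b i))⁻¹ := by
            intro b hb
            rw [show sigmaP c ε₀ b
                = ∏ i ∈ Finset.univ.filter (fun i => ε₀ i = true), lamP c b i from if_pos hb]
            rw [map_prod]
            rw [← Finset.prod_filter_mul_prod_filter_not
              (Finset.univ.filter (fun i => ε i = true)) (fun i => ε₀ i = true)
              (fun i => φ (lamP c b i))]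
            have e1 : (Finset.univ.filter (fun i => ε i = true)).filter (fun i => ε₀ i = true)
                = Finset.univ.filter (fun i => ε₀ i = true) := by
              ext x
              simp only [Finset.mem_filter, Finset.mem_univ, true_and]
              exact ⟨fun h => h.2, fun h => ⟨hle x h, h⟩⟩
            have e2 : (Finset.univ.filter (fun i => ε i = true)).filter
                (fun i => ¬ ε₀ i = true) = T := by
              ext x
              simp only [hT, Finset.mem_filter, Finset.mem_univ, true_and,
                Bool.not_eq_true]
            rw [e1, e2]
            exact div_mul_cancel_left₀
              (Finset.prod_ne_zero_iff.2 fun i _ => map_lamP_ne_zero c b i) _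
          rw [key a hc, key u (hcond.2 hc)]
          have hBu : (∏ i ∈ T, φ (lamP c u i)) = -(∏ i ∈ T, φ (lamP c a i)) := by
            rw [← Finset.mul_prod_erase T _ htT, ← Finset.mul_prod_erase T
              (fun i => φ (lamP c a i)) htT]
            rw [hu, lamP_update_self, map_neg, neg_mul]
            rw [neg_inj, mul_right_inj' (map_lamP_ne_zero c a t)]
            apply Finset.prod_congr rfl
            intro x hx
            have hxt : x < t := lt_of_le_of_ne (T.le_max' x (Finset.mem_of_mem_erase hx))
              (Finset.ne_of_mem_erase hx)
            rw [lamP_update_lt c a hxt]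
          rw [hBu, inv_neg]
          exact add_neg_cancel _
        · -- both zero
          rw [show sigmaP c ε₀ a = 0 from if_neg hc, map_zero, zero_div,
            show sigmaP c ε₀ u = 0 from if_neg (fun h => hc (hcond.1 h)), map_zero, zero_div,
            add_zero]
      · -- g a ≠ a
        intro a ha hfa heq
        simpa using congrFun heq t
      · -- involution
        intro a ha
        funext x
        by_cases hx : x = t
        · subst hx
          simp [Function.update_self]
        · simp [Function.update_of_ne hx]
      · -- g_mem
        intro a ha
        simp only [Finset.mem_filter, Finset.mem_univ, true_and]
        intro i hi
        by_cases hit : i = t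
        · exact hit ▸ hεt
        · exact (Finset.mem_filter.1 ha).2 i (by rwa [Function.update_of_ne hit] at hi)
    · -- ε₀ not ≤ ε: every term vanishes
      apply Finset.sum_eq_zero
      intro a ha
      rw [show sigmaP c ε₀ a = 0 from if_neg ?_, map_zero, zero_div]
      intro hall
      exact hle fun i hi => (Finset.mem_filter.1 ha).2 i (hall i hi)
end

section
/- For every ε ∈ ℰ, every 1 ≤ i ≤ N and every ε' ∈ ℰ, the following hold in ℚ[λ_1, …, λ_N]: (a) if i ∈ π₋(ε), then σ_{(i)}(ε')·σ_ε(ε') = σ_{ε+(i)}(ε'); (b) if i ∈ π₊(ε), then σ_{(i)}(ε')·σ_ε(ε') = σ_{(i)}(ε)·σ_ε(ε') + Σ_{j<i, j∈π₋(ε)} c_{j,i}(ε)·σ_{ε+(j)}(ε'). (This is the multiplication rule for the equivariant cohomology basis of a Bott tower, expressed on restrictions to fixed points.) -/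
open MvPolynomial

/-- The element `(i)` of `ℰ` whose only nonzero entry is in position `i`. -/
def deltaE {N : ℕ} (i : Fin N) : Fin N → Bool := fun j => decide (j = i)

/-- Componentwise sum mod 2, `ε + (j)`. -/
def addE {N : ℕ} (ε : Fin N → Bool) (j : Fin N) : Fin N → Bool :=
  fun k => xor (ε k) (decide (k = j))

/-! ### Auxiliary lemmas -/

lemma pathProd_append {N : ℕ} (c : Fin N → Fin N → ℤ) (l1 : List (Fin N)) :
    ∀ (a x : Fin N) (l2 : List (Fin N)),
      pathProd c (a :: (l1 ++ x :: l2)) = pathProd c (a :: (l1 ++ [x])) * pathProd c (x :: l2) := by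
  induction l1 with
  | nil =>
    intro a x l2
    simp only [List.nil_append]
    cases l2 with
    | nil => simp [pathProd]
    | cons b t => simp [pathProd, mul_assoc]
  | cons b t ih =>
    intro a x l2
    simp only [List.cons_append]
    show pathProd c (a :: b :: (t ++ x :: l2)) = _
    rw [pathProd, ih b x l2, pathProd, mul_assoc]

lemma sort_split {N : ℕ} (S1 S2 : Finset (Fin N)) (j : Fin N)
    (h1 : ∀ x ∈ S1, x < j) (h2 : ∀ x ∈ S2, j < x) :
    (insert j (S1 ∪ S2)).sort (· ≤ ·) = S1.sort (· ≤ ·) ++ j :: S2.sort (· ≤ ·) := by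
  apply fun hp h1 h2 => List.Perm.eq_of_pairwise' (r := ((· ≤ ·) : Fin N → Fin N → Prop)) h1 h2 hp
  · apply (List.perm_ext_iff_of_nodup (Finset.sort_nodup _ _) _).mpr
    · intro a
      simp only [Finset.mem_sort, Finset.mem_insert, Finset.mem_union, List.mem_append,
        List.mem_cons, Finset.mem_sort]
      tauto
    · apply List.Nodup.append (Finset.sort_nodup _ _)
      · refine List.nodup_cons.mpr ⟨?_, Finset.sort_nodup _ _⟩
        intro hj
        exact lt_irrefl j (h2 j (Finset.mem_sort _ |>.mp hj))
      · intro a ha hb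
        have ha' := h1 a (Finset.mem_sort _ |>.mp ha)
        rcases List.mem_cons.mp hb with rfl | hb'
        · exact lt_irrefl a ha'
        · exact lt_irrefl a (ha'.trans (h2 a (Finset.mem_sort _ |>.mp hb')))
  · exact Finset.pairwise_sort _ _
  · rw [List.pairwise_append]
    refine ⟨Finset.pairwise_sort _ _, ?_, ?_⟩
    · rw [List.pairwise_cons]
      exact ⟨fun b hb => (h2 b (Finset.mem_sort _ |>.mp hb)).le, Finset.pairwise_sort _ _⟩
    · intro a ha b hb
      have ha' := h1 a (Finset.mem_sort _ |>.mp ha)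
      rcases List.mem_cons.mp hb with rfl | hb'
      · exact ha'.le
      · exact (ha'.trans (h2 b (Finset.mem_sort _ |>.mp hb'))).le

lemma chainC_split {N : ℕ} (c : Fin N → Fin N → ℤ) (ε ε' : Fin N → Bool)
    (hle : ∀ x, ε x = true → ε' x = true) (k i : Fin N) :
    chainC c ε' k i = chainC c ε k i +
      ∑ j ∈ Finset.univ.filter (fun j => k < j ∧ j < i ∧ ε j = false ∧ ε' j = true),
        chainC c ε' k j * chainC c ε j i := by
  classical
  set A := Finset.univ.filter (fun x : Fin N => k < x ∧ x < i ∧ ε' x = true) with hA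
  set B := Finset.univ.filter (fun x : Fin N => k < x ∧ x < i ∧ ε x = true) with hB
  set D := Finset.univ.filter (fun j : Fin N => k < j ∧ j < i ∧ ε j = false ∧ ε' j = true) with hD
  set f : Finset (Fin N) → ℤ :=
    fun S => (-1) ^ (S.card + 1) * pathProd c (k :: (S.sort (· ≤ ·) ++ [i])) with hf
  have hBA : B ⊆ A := by
    intro x hx
    simp only [hA, hB, Finset.mem_filter, Finset.mem_univ, true_and] at hx ⊢
    exact ⟨hx.1, hx.2.1, hle x hx.2.2⟩
  have key : chainC c ε' k i = ∑ S ∈ A.powerset, f S := rfl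
  rw [key, ← Finset.sum_filter_add_sum_filter_not A.powerset (fun S => S ⊆ B) f]
  have h1 : A.powerset.filter (fun S => S ⊆ B) = B.powerset := by
    ext S
    simp only [Finset.mem_filter, Finset.mem_powerset]
    exact ⟨fun h => h.2, fun h => ⟨h.trans hBA, h⟩⟩
  rw [h1]
  congr 1
  set g : Finset (Fin N) → Fin N :=
    fun S => if h : (S \ B).Nonempty then (S \ B).max' h else k with hg
  rw [← Finset.sum_fiberwise_of_maps_to (g := g) (t := D) ?mapsto]
  case mapsto =>
    intro S hS
    simp only [Finset.mem_filter, Finset.mem_powerset] at hS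
    have hne : (S \ B).Nonempty := by
      rw [Finset.sdiff_nonempty]; exact hS.2
    have hmem : g S ∈ S \ B := by
      rw [hg]; simp only [dif_pos hne]; exact (S \ B).max'_mem hne
    rw [Finset.mem_sdiff] at hmem
    have hmA : g S ∈ A := hS.1 hmem.1
    simp only [hA, Finset.mem_filter, Finset.mem_univ, true_and] at hmA
    simp only [hD, Finset.mem_filter, Finset.mem_univ, true_and]
    refine ⟨hmA.1, hmA.2.1, ?_, hmA.2.2⟩
    by_contra h
    have : ε (g S) = true := by cases hh : ε (g S) <;> simp_all
    exact hmem.2 (by simp only [hB, Finset.mem_filter, Finset.mem_univ, true_and]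
                     exact ⟨hmA.1, hmA.2.1, this⟩)
  apply Finset.sum_congr rfl
  intro j hj
  simp only [hD, Finset.mem_filter, Finset.mem_univ, true_and] at hj
  obtain ⟨hkj, hji, hεj, hε'j⟩ := hj
  have hjB : j ∉ B := by
    simp only [hB, Finset.mem_filter, Finset.mem_univ, true_and]
    rintro ⟨-, -, h⟩; rw [hεj] at h; exact Bool.false_ne_true h
  have hjA : j ∈ A := by
    simp only [hA, Finset.mem_filter, Finset.mem_univ, true_and]
    exact ⟨hkj, hji, hε'j⟩
  set A1 := Finset.univ.filter (fun x : Fin N => k < x ∧ x < j ∧ ε' x = true) with hA1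
  set B2 := Finset.univ.filter (fun x : Fin N => j < x ∧ x < i ∧ ε x = true) with hB2
  show _ = (∑ S1 ∈ A1.powerset, _) * (∑ S2 ∈ B2.powerset, _)
  rw [Finset.sum_mul_sum, ← Finset.sum_product']
  apply Finset.sum_nbij' (i := fun S => (S.filter (· < j), S.filter (j < ·)))
    (j := fun p => insert j (p.1 ∪ p.2))
  · intro S hS
    simp only [Finset.mem_filter, Finset.mem_powerset] at hS
    obtain ⟨⟨hSA, hSnB⟩, hgS⟩ := hS
    have hne : (S \ B).Nonempty := by rw [Finset.sdiff_nonempty]; exact hSnB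
    rw [hg] at hgS; simp only [dif_pos hne] at hgS
    have hmax : ∀ x ∈ S \ B, x ≤ j := by
      intro x hx; rw [← hgS]; exact Finset.le_max' _ x hx
    have hgtB : ∀ x ∈ S, j < x → x ∈ B := by
      intro x hx hlt
      by_contra hxB
      exact absurd (hmax x (Finset.mem_sdiff.mpr ⟨hx, hxB⟩)) (not_le.mpr hlt)
    simp only [Finset.mem_product, Finset.mem_powerset]
    constructor
    · intro x hx
      rw [Finset.mem_filter] at hx
      have := hSA hx.1
      simp only [hA, Finset.mem_filter, Finset.mem_univ, true_and] at this
      simp only [hA1, Finset.mem_filter, Finset.mem_univ, true_and]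
      exact ⟨this.1, hx.2, this.2.2⟩
    · intro x hx
      rw [Finset.mem_filter] at hx
      have := hgtB x hx.1 hx.2
      simp only [hB, Finset.mem_filter, Finset.mem_univ, true_and] at this
      simp only [hB2, Finset.mem_filter, Finset.mem_univ, true_and]
      exact ⟨hx.2, this.2.1, this.2.2⟩
  · rintro ⟨S1, S2⟩ hp
    simp only [Finset.mem_product, Finset.mem_powerset] at hp
    obtain ⟨hS1, hS2⟩ := hp
    have hS1lt : ∀ x ∈ S1, x < j := by
      intro x hx; have := hS1 hx
      simp only [hA1, Finset.mem_filter, Finset.mem_univ, true_and] at this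
      exact this.2.1
    have hS2B : ∀ x ∈ S2, x ∈ B := by
      intro x hx; have := hS2 hx
      simp only [hB2, Finset.mem_filter, Finset.mem_univ, true_and] at this
      simp only [hB, Finset.mem_filter, Finset.mem_univ, true_and]
      exact ⟨hkj.trans this.1, this.2.1, this.2.2⟩
    simp only [Finset.mem_filter, Finset.mem_powerset]
    have hsub : insert j (S1 ∪ S2) ⊆ A := by
      intro x hx
      rcases Finset.mem_insert.mp hx with rfl | hx'
      · exact hjA
      rcases Finset.mem_union.mp hx' with h | h
      · have := hS1 h
        simp only [hA1, Finset.mem_filter, Finset.mem_univ, true_and] at this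
        simp only [hA, Finset.mem_filter, Finset.mem_univ, true_and]
        exact ⟨this.1, (this.2.1).trans hji, this.2.2⟩
      · exact hBA (hS2B x h)
    have hnsub : ¬ insert j (S1 ∪ S2) ⊆ B := by
      intro h
      exact hjB (h (Finset.mem_insert_self _ _))
    have hne : ((insert j (S1 ∪ S2)) \ B).Nonempty :=
      ⟨j, Finset.mem_sdiff.mpr ⟨Finset.mem_insert_self _ _, hjB⟩⟩
    refine ⟨⟨hsub, hnsub⟩, ?_⟩
    rw [hg]; simp only [dif_pos hne]
    apply le_antisymm
    · apply Finset.max'_le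
      intro x hx
      rw [Finset.mem_sdiff] at hx
      rcases Finset.mem_insert.mp hx.1 with rfl | hx'
      · exact le_refl _
      rcases Finset.mem_union.mp hx' with h | h
      · exact (hS1lt x h).le
      · exact absurd (hS2B x h) hx.2
    · exact Finset.le_max' _ j (Finset.mem_sdiff.mpr ⟨Finset.mem_insert_self _ _, hjB⟩)
  · intro S hS
    simp only [Finset.mem_filter, Finset.mem_powerset] at hS
    obtain ⟨⟨hSA, hSnB⟩, hgS⟩ := hS
    have hne : (S \ B).Nonempty := by rw [Finset.sdiff_nonempty]; exact hSnB
    rw [hg] at hgS; simp only [dif_pos hne] at hgS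
    have hjS : j ∈ S := by
      rw [← hgS]; exact (Finset.mem_sdiff.mp ((S \ B).max'_mem hne)).1
    ext x
    simp only [Finset.mem_insert, Finset.mem_union, Finset.mem_filter]
    constructor
    · rintro (rfl | ⟨h, -⟩ | ⟨h, -⟩) <;> first | exact hjS | exact h
    · intro hx
      rcases lt_trichotomy x j with h | h | h
      · exact Or.inr (Or.inl ⟨hx, h⟩)
      · exact Or.inl h
      · exact Or.inr (Or.inr ⟨hx, h⟩)
  · rintro ⟨S1, S2⟩ hp
    simp only [Finset.mem_product, Finset.mem_powerset] at hp
    obtain ⟨hS1, hS2⟩ := hp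
    have hS1lt : ∀ x ∈ S1, x < j := by
      intro x hx; have := hS1 hx
      simp only [hA1, Finset.mem_filter, Finset.mem_univ, true_and] at this
      exact this.2.1
    have hS2gt : ∀ x ∈ S2, j < x := by
      intro x hx; have := hS2 hx
      simp only [hB2, Finset.mem_filter, Finset.mem_univ, true_and] at this
      exact this.1
    have e1 : (insert j (S1 ∪ S2)).filter (· < j) = S1 := by
      ext x
      simp only [Finset.mem_filter, Finset.mem_insert, Finset.mem_union]
      constructor
      · rintro ⟨rfl | h | h, hlt⟩
        · exact absurd hlt (lt_irrefl x)
        · exact h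
        · exact absurd hlt (not_lt.mpr (hS2gt x h).le)
      · intro hx; exact ⟨Or.inr (Or.inl hx), hS1lt x hx⟩
    have e2 : (insert j (S1 ∪ S2)).filter (j < ·) = S2 := by
      ext x
      simp only [Finset.mem_filter, Finset.mem_insert, Finset.mem_union]
      constructor
      · rintro ⟨rfl | h | h, hlt⟩
        · exact absurd hlt (lt_irrefl x)
        · exact absurd hlt (not_lt.mpr (hS1lt x h).le)
        · exact h
      · intro hx; exact ⟨Or.inr (Or.inr hx), hS2gt x hx⟩
    rw [e1, e2]
  · intro S hS
    simp only [Finset.mem_filter, Finset.mem_powerset] at hS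
    obtain ⟨⟨hSA, hSnB⟩, hgS⟩ := hS
    have hne : (S \ B).Nonempty := by rw [Finset.sdiff_nonempty]; exact hSnB
    rw [hg] at hgS; simp only [dif_pos hne] at hgS
    have hjS : j ∈ S := by
      rw [← hgS]; exact (Finset.mem_sdiff.mp ((S \ B).max'_mem hne)).1
    set S1 := S.filter (· < j) with hS1def
    set S2 := S.filter (j < ·) with hS2def
    have hS1lt : ∀ x ∈ S1, x < j := fun x hx => (Finset.mem_filter.mp hx).2
    have hS2gt : ∀ x ∈ S2, j < x := fun x hx => (Finset.mem_filter.mp hx).2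
    have hSrec : S = insert j (S1 ∪ S2) := by
      ext x
      simp only [Finset.mem_insert, Finset.mem_union, hS1def, hS2def, Finset.mem_filter]
      constructor
      · intro hx
        rcases lt_trichotomy x j with h | h | h
        · exact Or.inr (Or.inl ⟨hx, h⟩)
        · exact Or.inl h
        · exact Or.inr (Or.inr ⟨hx, h⟩)
      · rintro (rfl | ⟨h, -⟩ | ⟨h, -⟩) <;> first | exact hjS | exact h
    have hjnot : j ∉ S1 ∪ S2 := by
      intro h
      rcases Finset.mem_union.mp h with h' | h'
      · exact lt_irrefl j (hS1lt j h')
      · exact lt_irrefl j (hS2gt j h')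
    have hdisj : Disjoint S1 S2 := by
      rw [Finset.disjoint_left]
      intro x h1' h2'
      exact lt_irrefl j ((hS2gt x h2').trans (hS1lt x h1'))
    have hcard : S.card = S1.card + S2.card + 1 := by
      rw [hSrec, Finset.card_insert_of_notMem hjnot, Finset.card_union_of_disjoint hdisj]
    have hsort : S.sort (· ≤ ·) = S1.sort (· ≤ ·) ++ j :: S2.sort (· ≤ ·) := by
      rw [hSrec]; exact sort_split S1 S2 j hS1lt hS2gt
    rw [hf]
    simp only
    rw [hsort, hcard]
    have hlist : (S1.sort (· ≤ ·) ++ j :: S2.sort (· ≤ ·)) ++ [i]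
        = S1.sort (· ≤ ·) ++ j :: (S2.sort (· ≤ ·) ++ [i]) := by
      simp [List.append_assoc]
    rw [hlist, pathProd_append c (S1.sort (· ≤ ·)) k j (S2.sort (· ≤ ·) ++ [i])]
    have hpow : ((-1 : ℤ)) ^ (S1.card + S2.card + 1 + 1)
        = (-1) ^ (S1.card + 1) * (-1) ^ (S2.card + 1) := by
      rw [← pow_add]; ring_nf
    rw [hpow]
    ring

lemma ite_sum_zero {α M : Type*} [AddCommMonoid M] (P : Prop) [Decidable P]
    (s : Finset α) (h : α → M) :
    (if P then ∑ x ∈ s, h x else 0) = ∑ x ∈ s, if P then h x else 0 := by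
  split <;> simp

lemma lamP_split {N : ℕ} (c : Fin N → Fin N → ℤ) (ε ε' : Fin N → Bool)
    (hle : ∀ x, ε x = true → ε' x = true) (i : Fin N) (hi : ε i = true) :
    lamP c ε' i = lamP c ε i +
      ∑ j ∈ Finset.univ.filter (fun j => j < i ∧ ε j = false ∧ ε' j = true),
        C ((chainC c ε j i : ℤ) : ℚ) * lamP c ε' j := by
  classical
  have hi' : ε' i = true := hle i hi
  set D := Finset.univ.filter (fun j : Fin N => j < i ∧ ε j = false ∧ ε' j = true) with hD
  have hRHS : ∑ j ∈ D, C ((chainC c ε j i : ℤ) : ℚ) * lamP c ε' j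
      = (∑ j ∈ D, C ((chainC c ε j i : ℤ) : ℚ) * X j)
        + ∑ j ∈ D, ∑ k ∈ Finset.univ.filter (fun k => k < j ∧ ε' k = true),
            C ((chainC c ε' k j : ℤ) : ℚ) * C ((chainC c ε j i : ℤ) : ℚ) * X k := by
    rw [← Finset.sum_add_distrib]
    apply Finset.sum_congr rfl
    intro j hj
    have hj' : ε' j = true := by
      simp only [hD, Finset.mem_filter, Finset.mem_univ, true_and] at hj
      exact hj.2.2
    rw [lamP, hj']
    simp only [if_true, one_mul]
    rw [mul_add, Finset.mul_sum]
    congr 1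
    apply Finset.sum_congr rfl
    intro k _
    ring
  rw [hRHS]
  rw [lamP, lamP, hi, hi']
  simp only [if_true, one_mul]
  have hpt : ∀ k : Fin N, C ((chainC c ε' k i : ℤ) : ℚ) * X k
      = C ((chainC c ε k i : ℤ) : ℚ) * X k
        + ∑ j ∈ Finset.univ.filter (fun j => k < j ∧ j < i ∧ ε j = false ∧ ε' j = true),
            C ((chainC c ε' k j : ℤ) : ℚ) * C ((chainC c ε j i : ℤ) : ℚ) * X k := by
    intro k
    rw [chainC_split c ε ε' hle k i]
    push_cast
    rw [map_add, map_sum, add_mul, Finset.sum_mul]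
    congr 1
    apply Finset.sum_congr rfl
    intro j _
    rw [map_mul]
  rw [Finset.sum_congr rfl (fun k _ => hpt k), Finset.sum_add_distrib]
  have hsplit : Finset.univ.filter (fun k : Fin N => k < i ∧ ε' k = true)
      = (Finset.univ.filter (fun k : Fin N => k < i ∧ ε k = true)) ∪ D := by
    ext k
    simp only [hD, Finset.mem_filter, Finset.mem_univ, true_and, Finset.mem_union]
    constructor
    · rintro ⟨h1, h2⟩
      cases hk : ε k
      · exact Or.inr ⟨h1, rfl, h2⟩
      · exact Or.inl ⟨h1, rfl⟩
    · rintro (⟨h1, h2⟩ | ⟨h1, h2, h3⟩)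
      · exact ⟨h1, hle k h2⟩
      · exact ⟨h1, h3⟩
  have hdisj : Disjoint (Finset.univ.filter (fun k : Fin N => k < i ∧ ε k = true)) D := by
    rw [Finset.disjoint_left]
    intro x hx hx'
    simp only [hD, Finset.mem_filter, Finset.mem_univ, true_and] at hx hx'
    rw [hx.2] at hx'
    exact absurd hx'.2.1 (by decide)
  rw [hsplit, Finset.sum_union hdisj]
  have hswap : ∑ k ∈ (Finset.univ.filter (fun k : Fin N => k < i ∧ ε k = true)) ∪ D,
        ∑ j ∈ Finset.univ.filter (fun j => k < j ∧ j < i ∧ ε j = false ∧ ε' j = true),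
          C ((chainC c ε' k j : ℤ) : ℚ) * C ((chainC c ε j i : ℤ) : ℚ) * X k
      = ∑ j ∈ D, ∑ k ∈ Finset.univ.filter (fun k => k < j ∧ ε' k = true),
          C ((chainC c ε' k j : ℤ) : ℚ) * C ((chainC c ε j i : ℤ) : ℚ) * X k := by
    rw [← hsplit]
    rw [Finset.sum_filter, hD, Finset.sum_filter]
    simp only [Finset.sum_filter, ite_sum_zero]
    rw [Finset.sum_comm]
    apply Finset.sum_congr rfl
    intro j _
    apply Finset.sum_congr rfl
    intro k _
    simp only [← ite_and]
    refine if_congr ?_ rfl rfl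
    constructor
    · rintro ⟨⟨hki, hk⟩, hkj, hji, he, he'⟩
      exact ⟨⟨hji, he, he'⟩, hkj, hk⟩
    · rintro ⟨⟨hji, he, he'⟩, hkj, hk⟩
      exact ⟨⟨hkj.trans hji, hk⟩, hkj, hji, he, he'⟩
  rw [hswap]
  ring

lemma sigmaP_delta {N : ℕ} (c : Fin N → Fin N → ℤ) (i : Fin N) (ε' : Fin N → Bool) :
    sigmaP c (deltaE i) ε' = if ε' i = true then lamP c ε' i else 0 := by
  classical
  rw [sigmaP]
  have hfilter : Finset.univ.filter (fun k : Fin N => deltaE i k = true) = {i} := by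
    ext k; simp [deltaE]
  by_cases h : ε' i = true
  · rw [if_pos, if_pos h, hfilter, Finset.prod_singleton]
    intro k hk
    simp only [deltaE, decide_eq_true_eq] at hk
    subst hk; exact h
  · rw [if_neg, if_neg h]
    intro hall
    exact h (hall i (by simp [deltaE]))

lemma sigma_mul_a {N : ℕ} (c : Fin N → Fin N → ℤ) (ε ε' : Fin N → Bool) (i : Fin N)
    (hi : ε i = false) :
    sigmaP c (deltaE i) ε' * sigmaP c ε ε' = sigmaP c (addE ε i) ε' := by
  classical
  have haddi : addE ε i i = true := by simp [addE, hi]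
  have haddk : ∀ k, k ≠ i → addE ε i k = ε k := by
    intro k hk; simp [addE, hk]
  by_cases hcond : ∀ k, ε k = true → ε' k = true
  · by_cases hi' : ε' i = true
    · rw [sigmaP_delta, if_pos hi']
      rw [sigmaP, if_pos hcond, sigmaP, if_pos ?c2]
      case c2 =>
        intro k hk
        by_cases hki : k = i
        · subst hki; exact hi'
        · exact hcond k (by rw [← haddk k hki]; exact hk)
      have hfilt : Finset.univ.filter (fun k : Fin N => addE ε i k = true)
          = insert i (Finset.univ.filter (fun k : Fin N => ε k = true)) := by
        ext k
        simp only [Finset.mem_filter, Finset.mem_univ, true_and, Finset.mem_insert]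
        by_cases hki : k = i
        · subst hki; simp [haddi]
        · rw [haddk k hki]; simp [hki]
      have hnotmem : i ∉ Finset.univ.filter (fun k : Fin N => ε k = true) := by
        simp [hi]
      rw [hfilt, Finset.prod_insert hnotmem]
    · rw [sigmaP_delta, if_neg hi', zero_mul, sigmaP, if_neg]
      intro hall
      exact hi' (hall i haddi)
  · have h0 : sigmaP c ε ε' = 0 := by rw [sigmaP, if_neg hcond]
    rw [h0, mul_zero, sigmaP, if_neg]
    intro hall
    apply hcond
    intro k hk
    have hki : k ≠ i := fun h => by rw [h, hi] at hk; exact absurd hk (by decide)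
    exact hall k (by rw [haddk k hki]; exact hk)

/-- Multiplication rule for the equivariant cohomology basis of a Bott tower,
expressed on restrictions to fixed points: for every `ε ∈ ℰ`, `1 ≤ i ≤ N`, `ε' ∈ ℰ`:
(a) if `i ∈ π₋(ε)` then `σ_{(i)}(ε')·σ_ε(ε') = σ_{ε+(i)}(ε')`;
(b) if `i ∈ π₊(ε)` then `σ_{(i)}(ε')·σ_ε(ε') = σ_{(i)}(ε)·σ_ε(ε')
      + Σ_{j<i, j∈π₋(ε)} c_{j,i}(ε)·σ_{ε+(j)}(ε')`. -/
theorem sigma_mul {N : ℕ} (hN : 1 ≤ N) (c : Fin N → Fin N → ℤ)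
    (ε ε' : Fin N → Bool) (i : Fin N) :
    (ε i = false →
      sigmaP c (deltaE i) ε' * sigmaP c ε ε' = sigmaP c (addE ε i) ε') ∧
    (ε i = true →
      sigmaP c (deltaE i) ε' * sigmaP c ε ε'
        = sigmaP c (deltaE i) ε * sigmaP c ε ε'
          + ∑ j ∈ Finset.univ.filter (fun j => j < i ∧ ε j = false),
              chainC c ε j i • sigmaP c (addE ε j) ε') := by
  classical
  constructor
  · exact sigma_mul_a c ε ε' i
  · intro hi
    have hzs : ∀ (n : ℤ) (p : MvPolynomial (Fin N) ℚ), n • p = C ((n : ℚ)) * p := by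
      intro n p
      rw [zsmul_eq_mul, ← map_intCast (C : ℚ →+* MvPolynomial (Fin N) ℚ) n]
    by_cases hcond : ∀ k, ε k = true → ε' k = true
    · have hi' : ε' i = true := hcond i hi
      rw [sigmaP_delta c i ε', if_pos hi', sigmaP_delta c i ε, if_pos hi]
      set P := sigmaP c ε ε' with hP
      have hsum : ∑ j ∈ Finset.univ.filter (fun j : Fin N => j < i ∧ ε j = false),
            chainC c ε j i • sigmaP c (addE ε j) ε'
          = ∑ j ∈ Finset.univ.filter (fun j : Fin N => j < i ∧ ε j = false ∧ ε' j = true),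
              C ((chainC c ε j i : ℤ) : ℚ) * (lamP c ε' j * P) := by
        have hff : Finset.univ.filter (fun j : Fin N => j < i ∧ ε j = false ∧ ε' j = true)
            = (Finset.univ.filter (fun j : Fin N => j < i ∧ ε j = false)).filter
                (fun j => ε' j = true) := by
          rw [Finset.filter_filter]
          apply Finset.filter_congr
          intro j _
          tauto
        rw [hff]
        conv_rhs => rw [Finset.sum_filter]
        apply Finset.sum_congr rfl
        intro j hj
        have hj0 : ε j = false := (Finset.mem_filter.mp hj).2.2
        rw [← sigma_mul_a c ε ε' j hj0, sigmaP_delta c j ε', hzs]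
        by_cases hj' : ε' j = true
        · rw [if_pos hj', if_pos hj']
        · rw [if_neg hj', if_neg hj', zero_mul, mul_zero]
      rw [hsum, lamP_split c ε ε' hcond i hi, add_mul, Finset.sum_mul]
      congr 1
      apply Finset.sum_congr rfl
      intro j _
      rw [mul_assoc]
    · have h0 : sigmaP c ε ε' = 0 := by rw [sigmaP, if_neg hcond]
      rw [h0, mul_zero, mul_zero, zero_add]
      symm
      apply Finset.sum_eq_zero
      intro j hj
      have hj0 : ε j = false := (Finset.mem_filter.mp hj).2.2
      rw [← sigma_mul_a c ε ε' j hj0, h0, mul_zero, smul_zero]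
end

section
/- For all ε₀, ε ∈ ℰ, the following identity holds in the field of fractions of ℤ[L]: the sum over all ε' ∈ ℰ with ε' ≤ ε of μ_{ε₀}(ε') / (Π_{i∈π₊(ε)} (1 − e^{−λ_i(ε')})) equals 1 if ε₀ = ε, and equals 0 otherwise. (This orthogonality identity is the combinatorial content of the theorem that the functions μ_ε are the fixed-point restrictions of the equivariant K-theory basis {μ̂^D_ε} of a Bott tower, characterized by χ(Ȳ_{ε'}, μ̂^D_ε) = δ_{ε,ε'} via the localization formula.) -/
/-- The element `λ_i(ε) = (−1)^{ε_i+1}(λ_i + Σ_{j<i, j∈π₊(ε)} c_{j,i}(ε)λ_j)` of the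
lattice `L = ℤ^N` (whose standard basis is `λ_1, …, λ_N`). -/
def lamZ {N : ℕ} (c : Fin N → Fin N → ℤ) (ε : Fin N → Bool) (i : Fin N) :
    Fin N → ℤ :=
  (if ε i then (1 : ℤ) else -1) •
    (Pi.single i (1 : ℤ) + ∑ j ∈ Finset.univ.filter (fun j => j < i ∧ ε j = true),
        chainC c ε j i • Pi.single j (1 : ℤ))

/-- `e^μ`, the standard basis element of the group algebra `ℤ[L]`. -/
noncomputable def eZ {N : ℕ} (μ : Fin N → ℤ) : AddMonoidAlgebra ℤ (Fin N → ℤ) :=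
  AddMonoidAlgebra.single μ 1

/-- `μ_ε(ε') = (Π_{i∈π₊(ε')} e^{−λ_i(ε')})·(Π_{i∈π₊(ε)} (e^{λ_i(ε')} − 1))` if
`ε ≤ ε'`, and `0` otherwise. -/
noncomputable def muZ {N : ℕ} (c : Fin N → Fin N → ℤ) (ε ε' : Fin N → Bool) :
    AddMonoidAlgebra ℤ (Fin N → ℤ) :=
  if ∀ i, ε i = true → ε' i = true then
    (∏ i ∈ Finset.univ.filter (fun i => ε' i = true), eZ (-(lamZ c ε' i))) *
      ∏ i ∈ Finset.univ.filter (fun i => ε i = true), (eZ (lamZ c ε' i) - 1)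
  else 0

instance (N : ℕ) : IsDomain (AddMonoidAlgebra ℤ (Fin N → ℤ)) :=
  NoZeroDivisors.to_isDomain _

namespace MuOrth

variable {N : ℕ}

noncomputable abbrev K (N : ℕ) := FractionRing (AddMonoidAlgebra ℤ (Fin N → ℤ))

noncomputable def fe (μ : Fin N → ℤ) : K N :=
  algebraMap (AddMonoidAlgebra ℤ (Fin N → ℤ)) (K N) (eZ μ)

lemma eZ_mul (μ ν : Fin N → ℤ) : eZ μ * eZ ν = eZ (μ + ν) := by
  simp [eZ, AddMonoidAlgebra.single_mul_single]

lemma eZ_zero : (eZ (0 : Fin N → ℤ)) = 1 := rfl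

lemma fe_mul (μ ν : Fin N → ℤ) : fe μ * fe ν = fe (μ + ν) := by
  rw [fe, fe, fe, ← map_mul, eZ_mul]

lemma fe_zero : fe (0 : Fin N → ℤ) = 1 := by
  rw [fe, eZ_zero, map_one]

lemma fe_mul_neg (μ : Fin N → ℤ) : fe μ * fe (-μ) = 1 := by
  rw [fe_mul, add_neg_cancel, fe_zero]

lemma fe_ne_zero (μ : Fin N → ℤ) : fe μ ≠ 0 :=
  left_ne_zero_of_mul_eq_one (fe_mul_neg μ)

lemma fe_eq_inv (μ : Fin N → ℤ) : fe μ = (fe (-μ))⁻¹ :=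
  eq_inv_of_mul_eq_one_right (by rw [mul_comm]; exact fe_mul_neg μ)

lemma fe_sub_one_ne_zero {μ : Fin N → ℤ} (h : μ ≠ 0) : fe μ - 1 ≠ 0 := by
  have hinj := IsFractionRing.injective (AddMonoidAlgebra ℤ (Fin N → ℤ)) (K N)
  intro hc
  apply h
  have h1 : fe μ = algebraMap (AddMonoidAlgebra ℤ (Fin N → ℤ)) (K N) 1 := by
    rw [map_one]; linear_combination hc
  have := hinj h1
  rw [eZ, show (1 : AddMonoidAlgebra ℤ (Fin N → ℤ)) = AddMonoidAlgebra.single 0 1 from rfl]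
    at this
  have := AddMonoidAlgebra.single_inj.mp this
  simpa using this

lemma one_sub_fe_neg (μ : Fin N → ℤ) : 1 - fe (-μ) = fe (-μ) * (fe μ - 1) := by
  rw [mul_sub, mul_one, mul_comm, fe_mul_neg]

lemma lamZ_ne_zero (c : Fin N → Fin N → ℤ) (ε : Fin N → Bool) (i : Fin N) :
    lamZ c ε i ≠ 0 := by
  intro h
  have hi := congrFun h i
  have hsum : (∑ j ∈ Finset.univ.filter (fun j => j < i ∧ ε j = true),
      chainC c ε j i • Pi.single j (1:ℤ)) i = 0 := by
    rw [Finset.sum_apply]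
    refine Finset.sum_eq_zero fun j hj => ?_
    have hji : j ≠ i := ne_of_lt (Finset.mem_filter.mp hj).2.1
    simp [Pi.single_apply, hji]
  simp only [lamZ, Pi.smul_apply, Pi.add_apply, hsum, Pi.zero_apply] at hi
  rw [Pi.single_eq_same, add_zero, smul_eq_mul, mul_one] at hi
  rcases ite_eq_or_eq (ε i = true) (1:ℤ) (-1) with h' | h' <;> omega

lemma chainC_congr (c : Fin N → Fin N → ℤ) {ε ε₂ : Fin N → Bool} (k l : Fin N)
    (h : ∀ j, j < l → ε j = ε₂ j) : chainC c ε k l = chainC c ε₂ k l := by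
  unfold chainC
  have : (Finset.univ.filter (fun j => k < j ∧ j < l ∧ ε j = true))
      = (Finset.univ.filter (fun j => k < j ∧ j < l ∧ ε₂ j = true)) := by
    apply Finset.filter_congr
    intro j _
    constructor
    · rintro ⟨h1, h2, h3⟩; exact ⟨h1, h2, (h j h2) ▸ h3⟩
    · rintro ⟨h1, h2, h3⟩; exact ⟨h1, h2, (h j h2).symm ▸ h3⟩
  rw [this]

lemma lamZ_congr (c : Fin N → Fin N → ℤ) {ε ε₂ : Fin N → Bool} (i : Fin N)
    (h : ∀ j, j ≤ i → ε j = ε₂ j) : lamZ c ε i = lamZ c ε₂ i := by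
  unfold lamZ
  rw [h i le_rfl]
  congr 1
  congr 1
  apply Finset.sum_congr
  · apply Finset.filter_congr
    intro j _
    constructor
    · rintro ⟨h1, h3⟩; exact ⟨h1, (h j (le_of_lt h1)) ▸ h3⟩
    · rintro ⟨h1, h3⟩; exact ⟨h1, (h j (le_of_lt h1)).symm ▸ h3⟩
  · intro j hj
    have hji : j < i := (Finset.mem_filter.mp hj).2.1
    rw [chainC_congr c j i (fun j' hj' => h j' (le_of_lt hj'))]

lemma lamZ_flip (c : Fin N → Fin N → ℤ) (ε : Fin N → Bool) (m : Fin N) :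
    lamZ c (Function.update ε m (!ε m)) m = -(lamZ c ε m) := by
  unfold lamZ
  have h1 : ∀ j : Fin N, j < m → (Function.update ε m (!ε m)) j = ε j := by
    intro j hj
    exact Function.update_of_ne (ne_of_lt hj) _ _
  have hfil : (Finset.univ.filter (fun j => j < m ∧ (Function.update ε m (!ε m)) j = true))
      = (Finset.univ.filter (fun j => j < m ∧ ε j = true)) := by
    apply Finset.filter_congr
    intro j _
    constructor
    · rintro ⟨hj, h3⟩; exact ⟨hj, (h1 j hj) ▸ h3⟩
    · rintro ⟨hj, h3⟩; exact ⟨hj, (h1 j hj).symm ▸ h3⟩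
  have hchain : ∀ j ∈ Finset.univ.filter (fun j => j < m ∧ ε j = true),
      chainC c (Function.update ε m (!ε m)) j m • (Pi.single j (1:ℤ) : Fin N → ℤ)
        = chainC c ε j m • (Pi.single j (1:ℤ) : Fin N → ℤ) := by
    intro j hj
    rw [chainC_congr c j m h1]
  rw [hfil, Finset.sum_congr rfl hchain]
  rw [Function.update_self]
  rcases Bool.eq_false_or_eq_true (ε m) with h | h <;>
    simp [h, neg_smul, add_comm]


/-- The set `π₊(ε)` as a finset. -/
def Pe (ε : Fin N → Bool) : Finset (Fin N) := Finset.univ.filter (fun i => ε i = true)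

lemma mem_Pe {ε : Fin N → Bool} {i : Fin N} : i ∈ Pe ε ↔ ε i = true := by
  simp [Pe]

lemma fe_def (μ : Fin N → ℤ) :
    algebraMap (AddMonoidAlgebra ℤ (Fin N → ℤ)) (K N) (eZ μ) = fe μ := rfl

lemma Pe_def (ε : Fin N → Bool) :
    Finset.univ.filter (fun i => ε i = true) = Pe ε := rfl

lemma prod_z_ne_zero (c : Fin N → Fin N → ℤ) (ε' : Fin N → Bool) (s : Finset (Fin N)) :
    (∏ i ∈ s, (fe (lamZ c ε' i) - 1)) ≠ 0 :=
  Finset.prod_ne_zero_iff.mpr fun i _ => fe_sub_one_ne_zero (lamZ_ne_zero c ε' i)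

lemma prod_fe_ne_zero (lam : Fin N → Fin N → ℤ) (s : Finset (Fin N)) :
    (∏ i ∈ s, fe (lam i)) ≠ 0 :=
  Finset.prod_ne_zero_iff.mpr fun i _ => fe_ne_zero _

lemma term_eq (c : Fin N → Fin N → ℤ) (ε₀ ε ε' : Fin N → Bool)
    (h0 : ∀ i, ε₀ i = true → ε' i = true) (h1 : ∀ i, ε' i = true → ε i = true) :
    algebraMap (AddMonoidAlgebra ℤ (Fin N → ℤ)) (K N) (muZ c ε₀ ε')
        / ∏ i ∈ Pe ε, (1 - fe (-(lamZ c ε' i)))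
      = (∏ i ∈ Pe ε \ Pe ε', fe (lamZ c ε' i))
          * (∏ i ∈ Pe ε \ Pe ε₀, (fe (lamZ c ε' i) - 1))⁻¹ := by
  have hsub' : Pe ε' ⊆ Pe ε := fun i hi => mem_Pe.mpr (h1 i (mem_Pe.mp hi))
  have hsub0 : Pe ε₀ ⊆ Pe ε := fun i hi => mem_Pe.mpr (h1 i (h0 i (mem_Pe.mp hi)))
  rw [muZ, if_pos h0, map_mul, map_prod, map_prod]
  have hnum : ∀ i : Fin N,
      algebraMap (AddMonoidAlgebra ℤ (Fin N → ℤ)) (K N) (eZ (lamZ c ε' i) - 1)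
        = fe (lamZ c ε' i) - 1 := by
    intro i; rw [map_sub, map_one, fe]
  simp only [hnum, fe_def, Pe_def]
  have hD : (∏ i ∈ Pe ε, (1 - fe (-(lamZ c ε' i))))
      = (∏ i ∈ Pe ε, fe (-(lamZ c ε' i))) * ∏ i ∈ Pe ε, (fe (lamZ c ε' i) - 1) := by
    rw [← Finset.prod_mul_distrib]
    exact Finset.prod_congr rfl fun i _ => one_sub_fe_neg _
  rw [hD]
  rw [← Finset.prod_sdiff hsub', ← Finset.prod_sdiff hsub0]
  have hx : (∏ i ∈ Pe ε \ Pe ε', fe (lamZ c ε' i))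
      = (∏ i ∈ Pe ε \ Pe ε', fe (-(lamZ c ε' i)))⁻¹ := by
    rw [← Finset.prod_inv_distrib]
    exact Finset.prod_congr rfl fun i _ => fe_eq_inv _
  rw [hx]
  have n1 := prod_fe_ne_zero (fun i => -(lamZ c ε' i)) (Pe ε \ Pe ε')
  have n2 := prod_fe_ne_zero (fun i => -(lamZ c ε' i)) (Pe ε')
  have n3 := prod_z_ne_zero c ε' (Pe ε \ Pe ε₀)
  have n4 := prod_z_ne_zero c ε' (Pe ε₀)
  field_simp


lemma term_flip (c : Fin N → Fin N → ℤ) (ε₀ ε : Fin N → Bool) (m : Fin N)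
    (hm : ε m = true) (hm0 : ε₀ m = false)
    (hmax : ∀ i, ε i = true → ε₀ i = false → i ≤ m)
    (ε' : Fin N → Bool) (h'm : ε' m = false)
    (h0 : ∀ i, ε₀ i = true → ε' i = true) (h1 : ∀ i, ε' i = true → ε i = true) :
    (algebraMap (AddMonoidAlgebra ℤ (Fin N → ℤ)) (K N) (muZ c ε₀ ε')
        / ∏ i ∈ Pe ε, (1 - fe (-(lamZ c ε' i))))
      + (algebraMap (AddMonoidAlgebra ℤ (Fin N → ℤ)) (K N)
            (muZ c ε₀ (Function.update ε' m true))
          / ∏ i ∈ Pe ε, (1 - fe (-(lamZ c (Function.update ε' m true) i)))) = 0 := by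
  set ε'' := Function.update ε' m true with hε''
  have h0'' : ∀ i, ε₀ i = true → ε'' i = true := by
    intro i hi
    by_cases him : i = m
    · subst him; rw [hi] at hm0; exact absurd hm0 (by simp)
    · rw [hε'', Function.update_of_ne him]; exact h0 i hi
  have h1'' : ∀ i, ε'' i = true → ε i = true := by
    intro i hi
    by_cases him : i = m
    · subst him; exact hm
    · rw [hε'', Function.update_of_ne him] at hi; exact h1 i hi
  rw [term_eq c ε₀ ε ε' h0 h1, term_eq c ε₀ ε ε'' h0'' h1'']
  -- membership facts
  have hm_mem : m ∈ Pe ε \ Pe ε' := by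
    rw [Finset.mem_sdiff, mem_Pe, mem_Pe]; exact ⟨hm, by simp [h'm]⟩
  have hmA : m ∈ Pe ε \ Pe ε₀ := by
    rw [Finset.mem_sdiff, mem_Pe, mem_Pe]; exact ⟨hm, by simp [hm0]⟩
  have hsubA : Pe ε \ Pe ε' ⊆ Pe ε \ Pe ε₀ := by
    intro i hi
    rw [Finset.mem_sdiff, mem_Pe, mem_Pe] at hi ⊢
    exact ⟨hi.1, fun h => hi.2 (h0 i h)⟩
  have hltA : ∀ i ∈ Pe ε \ Pe ε₀, i ≠ m → i < m := by
    intro i hi hne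
    rw [Finset.mem_sdiff, mem_Pe, mem_Pe] at hi
    have h2 : ε₀ i = false := by
      cases h : ε₀ i
      · rfl
      · exact absurd h hi.2
    exact lt_of_le_of_ne (hmax i hi.1 h2) hne
  -- lamZ invariance below m and flip at m
  have hlam_lt : ∀ i : Fin N, i < m → lamZ c ε'' i = lamZ c ε' i := by
    intro i hi
    refine (lamZ_congr c i fun j hj => ?_).symm
    exact (Function.update_of_ne (ne_of_lt (lt_of_le_of_lt hj hi)) _ _).symm
  have hlam_m : lamZ c ε'' m = -(lamZ c ε' m) := by
    have : ε'' = Function.update ε' m (!ε' m) := by rw [h'm]; rfl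
    rw [this]
    exact lamZ_flip c ε' m
  -- rewrite the four products
  have hPe'' : Pe ε \ Pe ε'' = (Pe ε \ Pe ε').erase m := by
    ext i
    by_cases him : i = m
    · subst him
      simp [Pe, hε'', Function.update_self, Finset.mem_erase]
    · simp [Pe, Finset.mem_erase, him, hε'', Function.update_of_ne him]
  have hprod1 : (∏ i ∈ Pe ε \ Pe ε', fe (lamZ c ε' i))
      = fe (lamZ c ε' m) * ∏ i ∈ (Pe ε \ Pe ε').erase m, fe (lamZ c ε' i) :=
    (Finset.mul_prod_erase _ _ hm_mem).symm
  have hprod2 : (∏ i ∈ Pe ε \ Pe ε'', fe (lamZ c ε'' i))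
      = ∏ i ∈ (Pe ε \ Pe ε').erase m, fe (lamZ c ε' i) := by
    rw [hPe'']
    refine Finset.prod_congr rfl fun i hi => ?_
    have := Finset.mem_erase.mp hi
    rw [hlam_lt i (hltA i (hsubA this.2) this.1)]
  have hprod3 : (∏ i ∈ Pe ε \ Pe ε₀, (fe (lamZ c ε' i) - 1))
      = (fe (lamZ c ε' m) - 1) * ∏ i ∈ (Pe ε \ Pe ε₀).erase m, (fe (lamZ c ε' i) - 1) :=
    (Finset.mul_prod_erase _ _ hmA).symm
  have hprod4 : (∏ i ∈ Pe ε \ Pe ε₀, (fe (lamZ c ε'' i) - 1))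
      = (fe (-(lamZ c ε' m)) - 1)
          * ∏ i ∈ (Pe ε \ Pe ε₀).erase m, (fe (lamZ c ε' i) - 1) := by
    rw [← Finset.mul_prod_erase _ _ hmA, hlam_m]
    congr 1
    refine Finset.prod_congr rfl fun i hi => ?_
    have := Finset.mem_erase.mp hi
    rw [hlam_lt i (hltA i this.2 this.1)]
  rw [hprod1, hprod2, hprod3, hprod4]
  set X := fe (lamZ c ε' m) with hX
  set Q := ∏ i ∈ (Pe ε \ Pe ε').erase m, fe (lamZ c ε' i) with hQ
  set W := ∏ i ∈ (Pe ε \ Pe ε₀).erase m, (fe (lamZ c ε' i) - 1) with hW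
  have hXinv : fe (-(lamZ c ε' m)) = X⁻¹ := by
    rw [hX, fe_eq_inv (-(lamZ c ε' m)), neg_neg]
  rw [hXinv]
  have hX0 : X ≠ 0 := fe_ne_zero _
  have hX1 : X - 1 ≠ 0 := fe_sub_one_ne_zero (lamZ_ne_zero c ε' m)
  have hW0 : W ≠ 0 := prod_z_ne_zero c ε' _
  have hXi1 : X⁻¹ - 1 ≠ 0 := by
    rw [← hXinv]
    exact fe_sub_one_ne_zero (neg_ne_zero.mpr (lamZ_ne_zero c ε' m))
  have key : X⁻¹ - 1 = -(X - 1) * X⁻¹ := by field_simp; ring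
  rw [key]
  have h6 : -(X - 1) ≠ 0 := neg_ne_zero.mpr hX1
  have h7 : X⁻¹ ≠ 0 := inv_ne_zero hX0
  have h8 : -(X * W) + W ≠ 0 := by
    have h9 : -(X * W) + W = -((X - 1) * W) := by ring
    rw [h9]
    exact neg_ne_zero.mpr (mul_ne_zero hX1 hW0)
  field_simp
  ring


end MuOrth

/-- Orthogonality identity in the field of fractions of `ℤ[L]`: for all
`ε₀, ε ∈ ℰ`, the sum over all `ε' ≤ ε` of
`μ_{ε₀}(ε') / Π_{i∈π₊(ε)} (1 − e^{−λ_i(ε')})` equals `1` if `ε₀ = ε` and `0`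
otherwise. This is the combinatorial content of the fact that the `μ_ε` are the
fixed-point restrictions of the equivariant K-theory basis of a Bott tower. -/
theorem mu_orthogonality {N : ℕ} (hN : 1 ≤ N) (c : Fin N → Fin N → ℤ)
    (ε₀ ε : Fin N → Bool) :
    (∑ ε' ∈ Finset.univ.filter (fun ε' : Fin N → Bool => ∀ i, ε' i = true → ε i = true),
        algebraMap (AddMonoidAlgebra ℤ (Fin N → ℤ))
            (FractionRing (AddMonoidAlgebra ℤ (Fin N → ℤ))) (muZ c ε₀ ε')
          / ∏ i ∈ Finset.univ.filter (fun i => ε i = true),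
              (1 - algebraMap (AddMonoidAlgebra ℤ (Fin N → ℤ))
                    (FractionRing (AddMonoidAlgebra ℤ (Fin N → ℤ))) (eZ (-(lamZ c ε' i)))))
      = if ε₀ = ε then 1 else 0 := by
  classical
  show (∑ ε' ∈ Finset.univ.filter (fun ε' : Fin N → Bool => ∀ i, ε' i = true → ε i = true),
        algebraMap (AddMonoidAlgebra ℤ (Fin N → ℤ)) (MuOrth.K N) (muZ c ε₀ ε')
          / ∏ i ∈ MuOrth.Pe ε, (1 - MuOrth.fe (-(lamZ c ε' i))))
      = if ε₀ = ε then 1 else 0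
  by_cases hle : ∀ i, ε₀ i = true → ε i = true
  · by_cases heq : ε₀ = ε
    · subst heq
      rw [if_pos rfl]
      have hmem : ε₀ ∈ Finset.univ.filter
          (fun ε' : Fin N → Bool => ∀ i, ε' i = true → ε₀ i = true) := by
        simp
      rw [Finset.sum_eq_single_of_mem ε₀ hmem ?side]
      case side =>
        intro ε' hε' hne
        have h1 : ∀ i, ε' i = true → ε₀ i = true := (Finset.mem_filter.mp hε').2
        have h2 : ¬ ∀ i, ε₀ i = true → ε' i = true := by
          intro h2
          apply hne
          funext i
          cases hv : ε' i
          · cases hv0 : ε₀ i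
            · rfl
            · rw [h2 i hv0] at hv; exact absurd hv (by simp)
          · rw [h1 i hv]
        rw [muZ, if_neg h2, map_zero, zero_div]
      rw [MuOrth.term_eq c ε₀ ε₀ ε₀ (fun i h => h) (fun i h => h)]
      simp [Finset.sdiff_self]
    · rw [if_neg heq]
      -- pick the largest index where ε₀ and ε differ
      have hA : ((MuOrth.Pe ε) \ (MuOrth.Pe ε₀)).Nonempty := by
        have : ∃ i, ε₀ i ≠ ε i := by
          by_contra h
          push_neg at h
          exact heq (funext h)
        obtain ⟨i, hi⟩ := this
        refine ⟨i, ?_⟩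
        rw [Finset.mem_sdiff, MuOrth.mem_Pe, MuOrth.mem_Pe]
        cases h0 : ε₀ i
        · cases h1 : ε i
          · rw [h0, h1] at hi; exact absurd rfl hi
          · simp
        · rw [hle i h0] at hi; rw [h0] at hi; exact absurd rfl hi
      set m := ((MuOrth.Pe ε) \ (MuOrth.Pe ε₀)).max' hA with hm_def
      have hmA := ((MuOrth.Pe ε) \ (MuOrth.Pe ε₀)).max'_mem hA
      rw [Finset.mem_sdiff, MuOrth.mem_Pe, MuOrth.mem_Pe] at hmA
      have hm : ε m = true := hmA.1
      have hm0 : ε₀ m = false := by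
        cases h : ε₀ m
        · rfl
        · exact absurd h hmA.2
      have hmax : ∀ i, ε i = true → ε₀ i = false → i ≤ m := by
        intro i hi hi0
        apply Finset.le_max'
        rw [Finset.mem_sdiff, MuOrth.mem_Pe, MuOrth.mem_Pe]
        exact ⟨hi, by simp [hi0]⟩
      refine Finset.sum_involution
        (fun ε' _ => Function.update ε' m (!ε' m)) ?h1 ?h3 ?hmem ?hinv
      case hmem =>
        intro ε' hε'
        have h1 : ∀ i, ε' i = true → ε i = true := by
          simpa using (Finset.mem_filter.mp hε').2
        simp only [Finset.mem_filter, Finset.mem_univ, true_and]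
        intro i hi
        by_cases him : i = m
        · subst him; exact hm
        · rw [Function.update_of_ne him] at hi; exact h1 i hi
      case hinv =>
        intro ε' hε'
        funext i
        by_cases him : i = m
        · subst him; simp [Function.update_self]
        · simp [Function.update_of_ne him]
      case h3 =>
        intro ε' hε' hf
        intro hgeq
        have h2 : Function.update ε' m (!ε' m) = ε' := hgeq
        have := congrFun h2 m
        rw [Function.update_self] at this
        cases h : ε' m <;> rw [h] at this <;> exact absurd this (by simp)
      case h1 =>
        intro ε' hε'
        beta_reduce
        have h1 : ∀ i, ε' i = true → ε i = true := by
          simpa using (Finset.mem_filter.mp hε').2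
        by_cases h0 : ∀ i, ε₀ i = true → ε' i = true
        · -- the cancelling pair
          cases h'm : ε' m
          · simp only [Bool.not_false]
            exact MuOrth.term_flip c ε₀ ε m hm hm0 hmax ε' h'm h0 h1
          · -- ε' m = true : apply the lemma to the updated function
            simp only [Bool.not_true]
            set ε'' := Function.update ε' m false with hε''
            rw [add_comm]
            have h''m : ε'' m = false := by rw [hε'']; simp [Function.update_self]
            have h0'' : ∀ i, ε₀ i = true → ε'' i = true := by
              intro i hi
              by_cases him : i = m
              · subst him; rw [hi] at hm0; exact absurd hm0 (by simp)
              · rw [hε'', Function.update_of_ne him]; exact h0 i hi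
            have h1'' : ∀ i, ε'' i = true → ε i = true := by
              intro i hi
              by_cases him : i = m
              · subst him; exact hm
              · rw [hε'', Function.update_of_ne him] at hi; exact h1 i hi
            have hback : Function.update ε'' m true = ε' := by
              funext i
              by_cases him : i = m
              · subst him; rw [Function.update_self, h'm]
              · rw [Function.update_of_ne him, hε'', Function.update_of_ne him]
            have := MuOrth.term_flip c ε₀ ε m hm hm0 hmax ε'' h''m h0'' h1''
            rwa [hback] at this
        · -- both terms vanish
          have h0' : ¬ ∀ i, ε₀ i = true → Function.update ε' m (!ε' m) i = true := by
            intro hcon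
            apply h0
            intro i hi
            by_cases him : i = m
            · subst him; rw [hi] at hm0; exact absurd hm0 (by simp)
            · have := hcon i hi
              rwa [Function.update_of_ne him] at this
          rw [muZ, if_neg h0, muZ, if_neg h0', map_zero, zero_div, zero_div, add_zero]
  · rw [if_neg (by intro h; subst h; exact hle fun i hi => hi)]
    apply Finset.sum_eq_zero
    intro ε' hε'
    have h1 : ∀ i, ε' i = true → ε i = true := by
      simpa using (Finset.mem_filter.mp hε').2
    have h0 : ¬ ∀ i, ε₀ i = true → ε' i = true := by
      intro h
      exact hle fun i hi => h1 i (h i hi)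
    rw [muZ, if_neg h0, map_zero, zero_div]
end

section
/- The family {x^ε}_{ε ∈ {0,1}^N} is a basis of 𝒜_D as an A-module; in particular, 𝒜_D is a free A-module of rank 2^N. -/
open MvPolynomial

/-- The relation `Q_k = X_k² − d_{k,k}X_k − Σ_{l<k} d_{l,k}X_lX_k`. -/
noncomputable def Qrel {A : Type*} [CommRing A] {N : ℕ} (d : Fin N → Fin N → A)
    (k : Fin N) : MvPolynomial (Fin N) A :=
  X k ^ 2 - C (d k k) * X k
    - ∑ l ∈ Finset.univ.filter (fun l => l < k), C (d l k) * (X l * X k)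

/-- The algebra `𝒜_D = A[X_1,…,X_N]/⟨Q_1,…,Q_N⟩`. -/
abbrev AlgD {A : Type*} [CommRing A] {N : ℕ} (d : Fin N → Fin N → A) : Type _ :=
  MvPolynomial (Fin N) A ⧸ Ideal.span (Set.range (Qrel d))

/-- `x_i`, the image of `X_i` in `𝒜_D`. -/
noncomputable def xD {A : Type*} [CommRing A] {N : ℕ} (d : Fin N → Fin N → A)
    (i : Fin N) : AlgD d :=
  Ideal.Quotient.mk _ (X i)

/-- `x^ε = Π_{i : ε_i = 1} x_i` in `𝒜_D`. -/
noncomputable def xPowD {A : Type*} [CommRing A] {N : ℕ} (d : Fin N → Fin N → A)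
    (ε : Fin N → Bool) : AlgD d :=
  ∏ i ∈ Finset.univ.filter (fun i => ε i = true), xD d i

/-!
Since `Q_k` only involves `X_1, …, X_k`, the last relation reads `Q_N = X_N² − c X_N` with `c`
a polynomial in `X_1, …, X_{N-1}`, and the other relations are those of `D` restricted to the
first `N - 1` indices. Hence `𝒜_D ≅ 𝒜_{D'}[T]/(T² − cT)`, which is free over `𝒜_{D'}` with basis
`1, T` because the quadratic is monic; induction on `N` gives the basis `x^ε`.
-/

theorem AdjoinRoot.exists_basis_X_sq_sub_C_mul_X {B : Type*} [CommRing B] (c : B) :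
    ∃ b : Module.Basis Bool B
        (AdjoinRoot (Polynomial.X ^ 2 - Polynomial.C c * Polynomial.X)),
      ∀ e, b e = if e then AdjoinRoot.root _ else 1 := by
  rcases subsingleton_or_nontrivial B with hB | hB
  · have : Subsingleton (AdjoinRoot (Polynomial.X ^ 2 - Polynomial.C c * Polynomial.X)) :=
      Module.subsingleton B _
    exact ⟨.ofRepr (LinearEquiv.ofSubsingleton _ _), fun _ => Subsingleton.elim _ _⟩
  have hlt : (Polynomial.C c * Polynomial.X).degree < 2 :=
    (Polynomial.degree_C_mul_X_le c).trans_lt (by decide)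
  let pb := AdjoinRoot.powerBasis' (Polynomial.monic_X_pow_sub hlt)
  have hdim : pb.dim = 2 := Polynomial.natDegree_eq_of_degree_eq_some <| by
    rw [Polynomial.degree_sub_eq_left_of_degree_lt (by rwa [Polynomial.degree_X_pow]),
      Polynomial.degree_X_pow]
  refine ⟨pb.basis.reindex ((finCongr hdim).trans finTwoEquiv), fun e => ?_⟩
  rw [Module.Basis.reindex_apply, pb.basis_eq_pow]
  cases e <;> simp [pb, finTwoEquiv]

namespace AlgD

section UniversalProperty

variable {A : Type*} [CommRing A] {N : ℕ} (d : Fin N → Fin N → A)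

theorem aeval_xD (p : MvPolynomial (Fin N) A) :
    aeval (xD d) p = Ideal.Quotient.mk _ p := by
  rw [← Ideal.Quotient.mkₐ_eq_mk A, aeval_unique (Ideal.Quotient.mkₐ A _)]
  rfl

theorem aeval_xD_Qrel (k : Fin N) : aeval (xD d) (Qrel d k) = 0 := by
  rw [aeval_xD, Ideal.Quotient.eq_zero_iff_mem]
  exact Ideal.subset_span ⟨k, rfl⟩

variable {S : Type*} [CommRing S] [Algebra A S]

noncomputable def lift (g : Fin N → S) (hg : ∀ k, aeval g (Qrel d k) = 0) : AlgD d →ₐ[A] S :=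
  Ideal.Quotient.liftₐ _ (aeval g) fun _ hp =>
    (Ideal.span_le (I := RingHom.ker (aeval g)).mpr (by rintro _ ⟨k, rfl⟩; exact hg k)) hp

@[simp]
theorem lift_xD (g : Fin N → S) (hg : ∀ k, aeval g (Qrel d k) = 0) (i : Fin N) :
    lift d g hg (xD d i) = g i :=
  aeval_X g i

theorem algHom_ext {φ ψ : AlgD d →ₐ[A] S} (h : ∀ i, φ (xD d i) = ψ (xD d i)) : φ = ψ :=
  Ideal.Quotient.algHom_ext A (MvPolynomial.algHom_ext h)

theorem aeval_comp_xD (φ : AlgD d →ₐ[A] S) (p : MvPolynomial (Fin N) A) :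
    aeval (fun i => φ (xD d i)) p = φ (Ideal.Quotient.mk _ p) := by
  rw [← aeval_xD, ← AlgHom.comp_apply, comp_aeval]

end UniversalProperty

section LastVariable

variable {A : Type*} [CommRing A] {n : ℕ} (d : Fin (n + 1) → Fin (n + 1) → A)

def truncD : Fin n → Fin n → A := fun i j => d i.castSucc j.castSucc

noncomputable def lastCoeff : MvPolynomial (Fin n) A :=
  C (d (Fin.last n) (Fin.last n)) + ∑ j : Fin n, C (d j.castSucc (Fin.last n)) * X j

theorem Qrel_castSucc (k : Fin n) :
    Qrel d k.castSucc = rename Fin.castSucc (Qrel (truncD d) k) := by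
  simp [Qrel, truncD, Finset.sum_filter, Fin.sum_univ_castSucc, (Fin.castSucc_lt_last k).not_gt,
    apply_ite (rename _)]

theorem Qrel_last :
    Qrel d (Fin.last n) =
      X (Fin.last n) ^ 2 - rename Fin.castSucc (lastCoeff d) * X (Fin.last n) := by
  simp [Qrel, lastCoeff, Finset.sum_filter, Fin.sum_univ_castSucc, Fin.castSucc_lt_last,
    add_mul, Finset.sum_mul, mul_assoc, sub_sub]

noncomputable def lastRel : Polynomial (AlgD (truncD d)) :=
  Polynomial.X ^ 2 - Polynomial.C (Ideal.Quotient.mk _ (lastCoeff d)) * Polynomial.X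

theorem eval₂_lastRel {S : Type*} [CommRing S] (φ : AlgD (truncD d) →+* S) (x : S) :
    (lastRel d).eval₂ φ x = x ^ 2 - φ (Ideal.Quotient.mk _ (lastCoeff d)) * x := by
  simp [lastRel]

noncomputable def castSuccHom : AlgD (truncD d) →ₐ[A] AlgD d :=
  lift (truncD d) (fun j => xD d j.castSucc) fun k => by
    have h := aeval_xD_Qrel d k.castSucc
    rwa [Qrel_castSucc, aeval_rename] at h

@[simp]
theorem castSuccHom_xD (j : Fin n) : castSuccHom d (xD (truncD d) j) = xD d j.castSucc :=
  lift_xD _ _ _ j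

theorem castSuccHom_mk (p : MvPolynomial (Fin n) A) :
    castSuccHom d (Ideal.Quotient.mk _ p) = Ideal.Quotient.mk _ (rename Fin.castSucc p) := by
  rw [← aeval_comp_xD, ← aeval_xD, aeval_rename]
  simp only [castSuccHom_xD, Function.comp_def]

theorem eval₂_lastRel_xD_last :
    (lastRel d).eval₂ (castSuccHom d : _ →+* AlgD d) (xD d (Fin.last n)) = 0 := by
  have h := aeval_xD_Qrel d (Fin.last n)
  rw [Qrel_last, map_sub, map_mul, map_pow, aeval_X, aeval_xD] at h
  rwa [eval₂_lastRel, AlgHom.coe_toRingHom, castSuccHom_mk]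

theorem aeval_of_xD (p : MvPolynomial (Fin n) A) :
    aeval (fun j => AdjoinRoot.of (lastRel d) (xD (truncD d) j)) p =
      AdjoinRoot.of (lastRel d) (Ideal.Quotient.mk _ p) :=
  aeval_comp_xD _ (AdjoinRoot.ofAlgHom A (lastRel d)) p

noncomputable def toAdjoinRoot : AlgD d →ₐ[A] AdjoinRoot (lastRel d) :=
  lift d (Fin.lastCases (AdjoinRoot.root _) fun j => AdjoinRoot.of _ (xD (truncD d) j)) fun k => by
    induction k using Fin.lastCases with
    | last =>
      rw [Qrel_last, map_sub, map_mul, map_pow, aeval_X, aeval_rename]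
      simp only [Function.comp_def, Fin.lastCases_castSucc, Fin.lastCases_last, aeval_of_xD]
      rw [← eval₂_lastRel]
      exact AdjoinRoot.eval₂_root (lastRel d)
    | cast k =>
      rw [Qrel_castSucc, aeval_rename]
      simp only [Function.comp_def, Fin.lastCases_castSucc, aeval_of_xD]
      rw [← aeval_xD, aeval_xD_Qrel, map_zero]

noncomputable def adjoinRootEquiv : AdjoinRoot (lastRel d) ≃ₐ[A] AlgD d :=
  AlgEquiv.ofAlgHom (AdjoinRoot.liftAlgHom _ (castSuccHom d) _ (eval₂_lastRel_xD_last d))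
    (toAdjoinRoot d)
    (algHom_ext d fun i => by
      induction i using Fin.lastCases <;> simp [toAdjoinRoot, AdjoinRoot.liftAlgHom_of,
        AdjoinRoot.liftAlgHom_root])
    (AdjoinRoot.algHom_ext' (algHom_ext _ fun j => by simp [toAdjoinRoot])
      (by simp [toAdjoinRoot]))

@[simp]
theorem adjoinRootEquiv_of (x : AlgD (truncD d)) :
    adjoinRootEquiv d (AdjoinRoot.of _ x) = castSuccHom d x :=
  AdjoinRoot.liftAlgHom_of _ (castSuccHom d) _ (eval₂_lastRel_xD_last d) x

@[simp]
theorem adjoinRootEquiv_root : adjoinRootEquiv d (AdjoinRoot.root _) = xD d (Fin.last n) :=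
  AdjoinRoot.liftAlgHom_root _ (castSuccHom d) _ (eval₂_lastRel_xD_last d)

theorem xPowD_snoc (ε : Fin n → Bool) (e : Bool) :
    xPowD d (Fin.snoc ε e) =
      castSuccHom d (xPowD (truncD d) ε) * if e then xD d (Fin.last n) else 1 := by
  simp [xPowD, Finset.prod_filter, Fin.prod_univ_castSucc, map_prod, apply_ite (castSuccHom d)]

theorem exists_basis_xPowD_succ
    (h : ∃ b : Module.Basis (Fin n → Bool) A (AlgD (truncD d)),
      ∀ ε, b ε = xPowD (truncD d) ε) :
    ∃ b : Module.Basis (Fin (n + 1) → Bool) A (AlgD d), ∀ ε, b ε = xPowD d ε := by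
  obtain ⟨b, hb⟩ := h
  obtain ⟨q, hq⟩ : ∃ q : Module.Basis Bool (AlgD (truncD d)) (AdjoinRoot (lastRel d)),
      ∀ e, q e = if e then AdjoinRoot.root _ else 1 :=
    AdjoinRoot.exists_basis_X_sq_sub_C_mul_X _
  refine ⟨((b.smulTower q).map (adjoinRootEquiv d).toLinearEquiv).reindex
    ((Equiv.prodComm _ _).trans (Fin.snocEquiv fun _ => Bool)), fun ε => ?_⟩
  obtain ⟨ε, e, rfl⟩ : ∃ ε' e, ε = Fin.snoc ε' e := ⟨_, _, (Fin.snoc_init_self ε).symm⟩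
  have hsplit : ((Equiv.prodComm _ _).trans (Fin.snocEquiv fun _ => Bool)).symm (Fin.snoc ε e) =
      (ε, e) := by simp [Fin.snocEquiv]
  rw [Module.Basis.reindex_apply, hsplit, Module.Basis.map_apply, Module.Basis.smulTower_apply,
    Algebra.smul_def]
  cases e <;> simp [hb, hq, xPowD_snoc]

end LastVariable

theorem exists_basis_xPowD_zero {A : Type*} [CommRing A] (d : Fin 0 → Fin 0 → A) :
    ∃ b : Module.Basis (Fin 0 → Bool) A (AlgD d), ∀ ε, b ε = xPowD d ε := by
  have hbot : Ideal.span (Set.range (Qrel d)) = ⊥ := by simp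
  let e : AlgD d ≃ₐ[A] A := (Ideal.quotientEquivAlgOfEq A hbot).trans <|
    (AlgEquiv.quotientBot A _).trans (isEmptyAlgEquiv A (Fin 0))
  refine ⟨(Module.Basis.singleton _ A).map e.symm.toLinearEquiv, fun ε => ?_⟩
  simp [xPowD]

end AlgD

theorem xPowD_isBasis_general {A : Type*} [CommRing A] {N : ℕ}
    (d : Fin N → Fin N → A) :
    ∃ b : Module.Basis (Fin N → Bool) A (AlgD d), ∀ ε, b ε = xPowD d ε := by
  induction N with
  | zero => exact AlgD.exists_basis_xPowD_zero d
  | succ n ih => exact AlgD.exists_basis_xPowD_succ d (ih _)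

/-- The family `{x^ε}_{ε ∈ {0,1}^N}` is a basis of `𝒜_D` as an `A`-module; in
particular `𝒜_D` is a free `A`-module of rank `2^N`. -/
theorem xPowD_isBasis {A : Type*} [CommRing A] {N : ℕ} (hN : 1 ≤ N)
    (d : Fin N → Fin N → A) :
    ∃ b : Module.Basis (Fin N → Bool) A (AlgD d), ∀ ε, b ε = xPowD d ε :=
  xPowD_isBasis_general d
end

section
/- For every polynomial P ∈ A[X_1, …, X_N] and every ε ∈ {0,1}^N, the coordinate of the image of P in 𝒜_D on the basis element x^ε equals T^ε(P); that is, if the image of P in 𝒜_D is written (uniquely) as Σ_ε P^ε x^ε with P^ε ∈ A, then P^ε = T^ε(P). In particular, the structure constants of 𝒜_D are given by q_{ε₁,ε₂}^{ε} = T^ε(X^{ε₁}·X^{ε₂}), where x^{ε₁}x^{ε₂} = Σ_ε q_{ε₁,ε₂}^{ε} x^ε. -/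
open MvPolynomial

/-- `X^ε = Π_{i : ε_i = 1} X_i` in `A[X_1,…,X_N]`. -/
noncomputable def XPow {A : Type*} [CommRing A] {N : ℕ} (ε : Fin N → Bool) :
    MvPolynomial (Fin N) A :=
  ∏ i ∈ Finset.univ.filter (fun i => ε i = true), X i

/-- Fuel-based implementation of the `A`-linear functionals `T^ε` on `A[X_1,…,X_N]`.
When the fuel equals the number of indices `i` with `ε i = 1`, it computes `T^ε`:
working on each monomial separately (linearity), it returns the constant coefficient
when `ε = 0`; it returns `0` on monomials involving a variable outside the support of
`ε` or not involving the top variable `i_l` of the support of `ε`; and it implements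
the recursion `T^ε(Q·X_{i_l}^s) = T^{ε−(i_l)}(Q·(d_{i_l,i_l} + Σ_{j<l}
d_{i_j,i_l}X_{i_j})^{s−1})`. -/
noncomputable def TcoefAux {A : Type*} [CommRing A] {N : ℕ} (d : Fin N → Fin N → A) :
    ℕ → (Fin N → Bool) → MvPolynomial (Fin N) A → A
  | 0, _, P => P.coeff 0
  | n + 1, ε, P =>
    if h : (Finset.univ.filter (fun i => ε i = true)).Nonempty then
      let i := (Finset.univ.filter (fun i => ε i = true)).max' h
      ∑ m ∈ P.support,
        if (∀ j, ε j = false → m j = 0) ∧ 1 ≤ m i then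
          P.coeff m *
            TcoefAux d n (Function.update ε i false)
              (monomial (Finsupp.erase i m) 1 *
                (C (d i i)
                  + ∑ j ∈ Finset.univ.filter (fun j => ε j = true ∧ j < i),
                      C (d j i) * X j) ^ (m i - 1))
        else 0
    else P.coeff 0

/-- The `A`-linear functional `T^ε : A[X_1,…,X_N] → A`. -/
noncomputable def Tcoef {A : Type*} [CommRing A] {N : ℕ} (d : Fin N → Fin N → A)
    (ε : Fin N → Bool) (P : MvPolynomial (Fin N) A) : A :=
  TcoefAux d (Finset.univ.filter (fun i => ε i = true)).card ε P

/-!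
Both `P ↦ [P]` and `P ↦ Σ_ε T^ε(P) x^ε` are `A`-linear, so it suffices to compare them on
monomials `X^m`, by induction on the largest variable `X_i` occurring in `X^m`. Write
`X^m = X^{m'} X_i^s` and `B_i = d_{i,i} + Σ_{l<i} d_{l,i} X_l`, so that `Q_i = X_i (X_i - B_i)`.
In `𝒜_D` we get `x_i^s = x_i B_i^{s-1}`, hence `[X^m] = x_i [X^{m'} B_i^{s-1}]`, and the
polynomial `X^{m'} B_i^{s-1}` only involves variables below `X_i`, so the induction hypothesis
expands it. Multiplying by `x_i` sends `x^ε` to `x^{ε+(i)}`, and the coefficients match by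
rule (e), `T^{ε+(i)}(X^m) = T^ε(X^{m'} B_i^{s-1})`. Rule (e) truncates `B_i` to the variables
of `π₊(ε)`, but the difference lies in the ideal generated by the variables outside `π₊(ε)`,
on which `T^ε` vanishes.
-/

theorem pow_succ_eq_mul_pow_of_sq_eq_mul {M : Type*} [CommMonoid M] {x b : M}
    (h : x ^ 2 = x * b) : ∀ s : ℕ, x ^ (s + 1) = x * b ^ s
  | 0 => by rw [pow_one, pow_zero, mul_one]
  | s + 1 => by
    rw [pow_succ, pow_succ_eq_mul_pow_of_sq_eq_mul h s, mul_right_comm, ← sq, h, pow_succ,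
      mul_assoc, mul_comm b]

namespace MvPolynomial

variable {σ R M : Type*} [CommSemiring R] [AddCommMonoid M] [Module R M]

theorem sum_support_coeff_mul_coeff_zero (P : MvPolynomial σ R) :
    ∑ m ∈ P.support, coeff m P * coeff 0 (monomial m (1 : R)) = coeff 0 P := by
  classical
  simp only [coeff_monomial, mul_ite, mul_one, mul_zero]
  rw [Finset.sum_ite_eq' P.support 0 (fun m => coeff m P)]
  split_ifs with h
  · rfl
  · exact (notMem_support_iff.1 h).symm

theorem linearMap_apply_eq_of_forall_monomial {f g : MvPolynomial σ R →ₗ[R] M}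
    {P : MvPolynomial σ R} (h : ∀ m ∈ P.support, f (monomial m 1) = g (monomial m 1)) :
    f P = g P := by
  rw [P.as_sum, map_sum, map_sum]
  refine Finset.sum_congr rfl fun m hm => ?_
  rw [← mul_one (coeff m P), ← smul_eq_mul, ← smul_monomial, map_smul, map_smul, h m hm]

theorem support_subset_of_mem_supported {s : Set σ} {P : MvPolynomial σ R}
    (hP : P ∈ supported R s) {m : σ →₀ ℕ} (hm : m ∈ P.support) : ↑m.support ⊆ s :=
  fun j hj => mem_supported.1 hP ((mem_vars_iff_mem_support j).2 ⟨m, hm, hj⟩)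

theorem monomial_mem_supported {s : Set σ} {m : σ →₀ ℕ} (hm : ↑m.support ⊆ s) (a : R) :
    monomial m a ∈ supported R s := by
  classical
  rw [mem_supported]
  by_cases ha : a = 0
  · simp [ha]
  · rwa [vars_monomial ha]

theorem X_mem_supported_of_mem {s : Set σ} {i : σ} (hi : i ∈ s) :
    (X i : MvPolynomial σ R) ∈ supported R s := by
  rw [supported_eq_adjoin_X]
  exact Algebra.subset_adjoin ⟨i, hi, rfl⟩

end MvPolynomial

section Functionals

open Function

variable {A : Type*} [CommRing A] {N : ℕ} (d : Fin N → Fin N → A)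

/-- `π₊(ε)`. -/
abbrev posSupport (ε : Fin N → Bool) : Finset (Fin N) :=
  Finset.univ.filter (fun i => ε i = true)

noncomputable abbrev outsideIdeal (ε : Fin N → Bool) : Ideal (MvPolynomial (Fin N) A) :=
  Ideal.span (X '' {l | ε l = false})

theorem TcoefAux_succ_monomial (n : ℕ) (ε : Fin N → Bool) (m : Fin N →₀ ℕ)
    (h : (posSupport ε).Nonempty) :
    TcoefAux d (n + 1) ε (monomial m 1) =
      if (∀ j, ε j = false → m j = 0) ∧ 1 ≤ m ((posSupport ε).max' h) then
        TcoefAux d n (update ε ((posSupport ε).max' h) false)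
          (monomial (m.erase ((posSupport ε).max' h)) 1 *
            (C (d ((posSupport ε).max' h) ((posSupport ε).max' h))
              + ∑ j ∈ Finset.univ.filter (fun j => ε j = true ∧ j < (posSupport ε).max' h),
                  C (d j ((posSupport ε).max' h)) * X j) ^ (m ((posSupport ε).max' h) - 1))
      else 0 := by
  classical
  rw [TcoefAux, dif_pos h, Finset.sum_subset support_monomial_subset fun m' _ hm' => by
    rw [notMem_support_iff.1 hm', zero_mul, ite_self], Finset.sum_singleton, coeff_monomial,
    if_pos rfl, one_mul]

theorem TcoefAux_eq_sum_coeff_mul (n : ℕ) (ε : Fin N → Bool) (P : MvPolynomial (Fin N) A) :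
    TcoefAux d n ε P = ∑ m ∈ P.support, coeff m P * TcoefAux d n ε (monomial m 1) := by
  cases n with
  | zero => simp only [TcoefAux, sum_support_coeff_mul_coeff_zero]
  | succ n =>
    by_cases h : (posSupport ε).Nonempty
    · rw [TcoefAux, dif_pos h]
      refine Finset.sum_congr rfl fun m _ => ?_
      rw [TcoefAux_succ_monomial d n ε m h, mul_ite, mul_zero]
    · simp only [TcoefAux, dif_neg h, sum_support_coeff_mul_coeff_zero]

theorem Tcoef_eq_sum_coeff_mul (ε : Fin N → Bool) (P : MvPolynomial (Fin N) A) :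
    Tcoef d ε P = ∑ m ∈ P.support, coeff m P * Tcoef d ε (monomial m 1) :=
  TcoefAux_eq_sum_coeff_mul d _ ε P

noncomputable def TcoefLinearMap (ε : Fin N → Bool) : MvPolynomial (Fin N) A →ₗ[A] A :=
  (basisMonomials (Fin N) A).constr A fun m => Tcoef d ε (monomial m 1)

@[simp]
theorem coe_TcoefLinearMap (ε : Fin N → Bool) : ⇑(TcoefLinearMap d ε) = Tcoef d ε := by
  funext P
  rw [TcoefLinearMap, Module.Basis.constr_apply, Tcoef_eq_sum_coeff_mul]
  exact sum_def

theorem Tcoef_sub (ε : Fin N → Bool) (P Q : MvPolynomial (Fin N) A) :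
    Tcoef d ε (P - Q) = Tcoef d ε P - Tcoef d ε Q := by
  simp only [← coe_TcoefLinearMap, map_sub]

theorem Tcoef_eq_zero_of_forall_monomial {ε : Fin N → Bool} {P : MvPolynomial (Fin N) A}
    (h : ∀ m ∈ P.support, Tcoef d ε (monomial m 1) = 0) : Tcoef d ε P = 0 := by
  rw [Tcoef_eq_sum_coeff_mul]
  exact Finset.sum_eq_zero fun m hm => by rw [h m hm, mul_zero]

theorem card_posSupport_update_false {ε : Fin N → Bool} {i : Fin N} (hi : ε i = true) :
    (posSupport ε).card = (posSupport (update ε i false)).card + 1 := by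
  have h : posSupport (update ε i false) = (posSupport ε).erase i := by
    ext j
    rcases eq_or_ne j i with rfl | hj <;> simp [*]
  rw [h, Finset.card_erase_add_one (by simpa using hi)]

theorem Tcoef_monomial_eq_zero_of_not_subset {ε : Fin N → Bool} {m : Fin N →₀ ℕ} {j : Fin N}
    (hj : ε j = false) (hm : m j ≠ 0) : Tcoef d ε (monomial m 1) = 0 := by
  classical
  by_cases h : (posSupport ε).Nonempty
  · obtain ⟨n, hn⟩ := Nat.exists_eq_add_one_of_ne_zero (Finset.card_pos.2 h).ne'
    rw [Tcoef, hn, TcoefAux_succ_monomial d n ε m h, if_neg fun hsub => hm (hsub.1 j hj)]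
  · have h0 : (posSupport ε).card = 0 := by simpa using h
    rw [Tcoef, h0, TcoefAux, coeff_monomial, if_neg]
    rintro rfl
    exact hm rfl

theorem Tcoef_monomial_eq_zero_of_top {ε : Fin N → Bool} {m : Fin N →₀ ℕ} {j : Fin N}
    (hj : ε j = true) (hm : ∀ k, j ≤ k → m k = 0) : Tcoef d ε (monomial m 1) = 0 := by
  have h : (posSupport ε).Nonempty := ⟨j, by simpa using hj⟩
  obtain ⟨n, hn⟩ := Nat.exists_eq_add_one_of_ne_zero (Finset.card_pos.2 h).ne'
  have htop : m ((posSupport ε).max' h) = 0 :=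
    hm _ (Finset.le_max' _ j (by simpa using hj))
  rw [Tcoef, hn, TcoefAux_succ_monomial d n ε m h, if_neg fun hsub => by omega]

theorem Tcoef_eq_zero_of_mem_outsideIdeal {ε : Fin N → Bool} {P : MvPolynomial (Fin N) A}
    (hP : P ∈ outsideIdeal ε) : Tcoef d ε P = 0 :=
  Tcoef_eq_zero_of_forall_monomial d fun m hm => by
    obtain ⟨j, hj, hmj⟩ := mem_ideal_span_X_image.1 hP m hm
    exact Tcoef_monomial_eq_zero_of_not_subset d hj hmj

theorem Tcoef_eq_zero_of_mem_supported {ε : Fin N → Bool} {P : MvPolynomial (Fin N) A}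
    {i j : Fin N} (hP : P ∈ supported A {l | l < i}) (hj : ε j = true) (hij : i ≤ j) :
    Tcoef d ε P = 0 :=
  Tcoef_eq_zero_of_forall_monomial d fun _ hm =>
    Tcoef_monomial_eq_zero_of_top d hj fun _ hk => Finsupp.notMem_support_iff.1 fun hmk =>
      (support_subset_of_mem_supported hP hm hmk).not_ge (hij.trans hk)

theorem Tcoef_mul_pow_eq_of_sub_mem {ε : Fin N → Bool} {B B' : MvPolynomial (Fin N) A}
    (h : B - B' ∈ outsideIdeal ε) (P : MvPolynomial (Fin N) A) (s : ℕ) :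
    Tcoef d ε (P * B ^ s) = Tcoef d ε (P * B' ^ s) := by
  rw [← sub_eq_zero, ← Tcoef_sub, ← mul_sub]
  exact Tcoef_eq_zero_of_mem_outsideIdeal d
    (Ideal.mul_mem_left _ _ (Ideal.mem_of_dvd _ (sub_dvd_pow_sub_pow B B' s) h))

theorem monomial_mem_outsideIdeal {ε : Fin N → Bool} {m : Fin N →₀ ℕ} {j : Fin N}
    (hj : ε j = false) (hm : m j ≠ 0) (a : A) : monomial m a ∈ outsideIdeal ε := by
  classical
  refine mem_ideal_span_X_image.2 fun m' hm' => ⟨j, hj, ?_⟩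
  rwa [Finset.mem_singleton.1 (support_monomial_subset hm')]

noncomputable def Bpoly (i : Fin N) : MvPolynomial (Fin N) A :=
  C (d i i) + ∑ l ∈ Finset.univ.filter (fun l => l < i), C (d l i) * X l

theorem Bpoly_sub_mem_outsideIdeal (ε : Fin N → Bool) (i : Fin N) :
    Bpoly d i - (C (d i i) + ∑ j ∈ Finset.univ.filter (fun j => ε j = true ∧ j < i),
      C (d j i) * X j) ∈ outsideIdeal (update ε i false) := by
  classical
  rw [Bpoly, add_sub_add_left_eq_sub, ← Finset.sum_sdiff_eq_sub fun l => by simp +contextual]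
  refine Ideal.sum_mem _ fun l hl => Ideal.mul_mem_left _ _ (Ideal.subset_span ⟨l, ?_, rfl⟩)
  simp only [Finset.mem_sdiff, Finset.mem_filter, Finset.mem_univ, true_and, not_and] at hl
  simpa [update_of_ne hl.1.ne] using mt hl.2 (not_not.2 hl.1)

theorem Tcoef_monomial_of_top {ε : Fin N → Bool} {m : Fin N →₀ ℕ} {i : Fin N}
    (hi : ε i = true) (hle : ∀ j, ε j = true → j ≤ i) (hm : m i ≠ 0) :
    Tcoef d ε (monomial m 1) =
      Tcoef d (update ε i false) (monomial (m.erase i) 1 * Bpoly d i ^ (m i - 1)) := by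
  have h : (posSupport ε).Nonempty := ⟨i, by simpa using hi⟩
  have htop : (posSupport ε).max' h = i :=
    le_antisymm (Finset.max'_le _ _ _ fun j hj => hle j (by simpa using hj))
      (Finset.le_max' _ i (by simpa using hi))
  rw [Tcoef, card_posSupport_update_false hi, TcoefAux_succ_monomial d _ ε m h, htop]
  split_ifs with hsub
  · exact (Tcoef_mul_pow_eq_of_sub_mem d (Bpoly_sub_mem_outsideIdeal d ε i) _ _).symm
  · obtain ⟨j, hj, hmj⟩ : ∃ j, ε j = false ∧ m j ≠ 0 := by
      by_contra! h'
      exact hsub ⟨h', Nat.one_le_iff_ne_zero.2 hm⟩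
    have hji : j ≠ i := by rintro rfl; simp [hi] at hj
    refine (Tcoef_eq_zero_of_mem_outsideIdeal d (Ideal.mul_mem_right _ _ ?_)).symm
    exact monomial_mem_outsideIdeal (by rwa [update_of_ne hji]) (by rwa [Finsupp.erase_ne hji]) 1

theorem Bpoly_mem_supported (i : Fin N) : Bpoly d i ∈ supported A {l | l < i} :=
  add_mem (Subalgebra.algebraMap_mem _ _) <| Subalgebra.sum_mem _ fun l hl =>
    mul_mem (Subalgebra.algebraMap_mem _ _) (X_mem_supported_of_mem (by simpa using hl))

theorem monomial_erase_mul_Bpoly_pow_mem_supported {m : Fin N →₀ ℕ} {i : Fin N}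
    (hm : ∀ j ∈ m.support, j ≤ i) (s : ℕ) :
    monomial (m.erase i) 1 * Bpoly d i ^ s ∈ supported A {l | l < i} := by
  refine mul_mem (monomial_mem_supported (fun j hj => ?_) 1) (pow_mem (Bpoly_mem_supported d i) s)
  rw [Finset.mem_coe, Finsupp.support_erase, Finset.mem_erase] at hj
  exact lt_of_le_of_ne (hm j hj.2) hj.1

theorem Tcoef_update_true_monomial {ε : Fin N → Bool} {m : Fin N →₀ ℕ} {i : Fin N}
    (hεi : ε i = false) (hm : ∀ j ∈ m.support, j ≤ i) (hmi : m i ≠ 0) :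
    Tcoef d (update ε i true) (monomial m 1) =
      Tcoef d ε (monomial (m.erase i) 1 * Bpoly d i ^ (m i - 1)) := by
  by_cases hε : ∃ j, ε j = true ∧ i < j
  · obtain ⟨j, hj, hij⟩ := hε
    rw [Tcoef_monomial_eq_zero_of_top d (j := j) (by rwa [update_of_ne hij.ne'])
        fun k hk => Finsupp.notMem_support_iff.1 fun hmk => (hm k hmk).not_gt (hij.trans_le hk),
      Tcoef_eq_zero_of_mem_supported d (monomial_erase_mul_Bpoly_pow_mem_supported d hm _) hj
        hij.le]
  · simp only [not_exists, not_and, not_lt] at hε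
    have hle : ∀ j, update ε i true j = true → j ≤ i := fun j hj => by
      rcases eq_or_ne j i with rfl | hji
      · exact le_rfl
      · exact hε j (by rwa [update_of_ne hji] at hj)
    rw [Tcoef_monomial_of_top d (update_self i true ε) hle hmi, update_idem,
      update_eq_self_iff.2 hεi.symm]

end Functionals

section Quotient

open Function

variable {A : Type*} [CommRing A] {N : ℕ} (d : Fin N → Fin N → A)

local notation "mkD" => Ideal.Quotient.mk (Ideal.span (Set.range (Qrel d)))

theorem Qrel_eq_X_mul (i : Fin N) : Qrel d i = X i * (X i - Bpoly d i) := by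
  have h : X i * ∑ l ∈ Finset.univ.filter (fun l => l < i), C (d l i) * X l
      = ∑ l ∈ Finset.univ.filter (fun l => l < i), C (d l i) * (X l * X i) := by
    rw [Finset.mul_sum]
    exact Finset.sum_congr rfl fun _ _ => by ring
  rw [Qrel, Bpoly, mul_sub, mul_add, h]
  ring

theorem xD_sq (i : Fin N) : xD d i ^ 2 = xD d i * mkD (Bpoly d i) := by
  rw [xD, ← map_pow, ← map_mul, Ideal.Quotient.eq]
  refine Ideal.subset_span ⟨i, ?_⟩
  rw [Qrel_eq_X_mul]
  ring

theorem mk_monomial_of_ne_zero {m : Fin N →₀ ℕ} {i : Fin N} (hmi : m i ≠ 0) :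
    mkD (monomial m 1) = xD d i * mkD (monomial (m.erase i) 1 * Bpoly d i ^ (m i - 1)) := by
  obtain ⟨s, hs⟩ := Nat.exists_eq_add_one_of_ne_zero hmi
  conv_lhs => rw [← Finsupp.erase_add_single i m, monomial_add_single, hs]
  rw [map_mul, map_pow, ← xD, pow_succ_eq_mul_pow_of_sq_eq_mul (xD_sq d i), hs,
    Nat.add_sub_cancel, map_mul, map_pow]
  ring

theorem xPowD_update_true {ε : Fin N → Bool} {i : Fin N} (hεi : ε i = false) :
    xPowD d (update ε i true) = xD d i * xPowD d ε := by
  have h : Finset.univ.filter (fun j => update ε i true j = true)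
      = insert i (Finset.univ.filter fun j => ε j = true) := by
    ext j
    rcases eq_or_ne j i with rfl | hj <;> simp [*]
  rw [xPowD, xPowD, h, Finset.prod_insert (by simp [hεi])]

theorem xPowD_eq_mk_XPow (ε : Fin N → Bool) : xPowD d ε = mkD (XPow ε) := by
  rw [xPowD, XPow, map_prod]
  rfl

end Quotient

section Expansion

open Function

variable {A : Type*} [CommRing A] {N : ℕ} (d : Fin N → Fin N → A)

local notation "mkD" => Ideal.Quotient.mk (Ideal.span (Set.range (Qrel d)))

noncomputable def expansion : MvPolynomial (Fin N) A →ₗ[A] AlgD d :=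
  ∑ ε, (TcoefLinearMap d ε).smulRight (xPowD d ε)

theorem expansion_apply (P : MvPolynomial (Fin N) A) :
    expansion d P = ∑ ε, Tcoef d ε P • xPowD d ε := by
  simp [expansion]

theorem expansion_one : expansion d 1 = 1 := by
  rw [expansion_apply, Fintype.sum_eq_single fun _ => false]
  · have h0 : (posSupport fun _ : Fin N => false).card = 0 := by simp
    rw [Tcoef, h0, TcoefAux, coeff_zero_one, one_smul, xPowD]
    simp
  · intro ε hε
    obtain ⟨j, hj⟩ : ∃ j, ε j = true := by
      by_contra! h
      exact hε (funext fun j => by simpa using h j)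
    rw [one_def, Tcoef_monomial_eq_zero_of_top d hj fun _ _ => rfl, zero_smul]

theorem expansion_monomial {m : Fin N →₀ ℕ} {i : Fin N} (hm : ∀ j ∈ m.support, j ≤ i)
    (hmi : m i ≠ 0) :
    expansion d (monomial m 1) =
      xD d i * expansion d (monomial (m.erase i) 1 * Bpoly d i ^ (m i - 1)) := by
  -- The term of `ε` with `ε i = false` on the right matches the term of `update ε i true` on
  -- the left; all other terms vanish on both sides.
  rw [expansion_apply, expansion_apply, Finset.mul_sum,
    ← Equiv.sum_comp (Involutive.toPerm (fun ε => update ε i (!ε i)) fun ε => by simp)]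
  refine Fintype.sum_congr _ _ fun ε => ?_
  change Tcoef d (update ε i (!ε i)) (monomial m 1) • xPowD d (update ε i (!ε i)) = _
  cases hεi : ε i
  · rw [Bool.not_false, Tcoef_update_true_monomial d hεi hm hmi, xPowD_update_true d hεi,
      mul_smul_comm]
  · rw [Bool.not_true, Tcoef_monomial_eq_zero_of_not_subset d (update_self i false ε) hmi,
      Tcoef_eq_zero_of_mem_supported d (monomial_erase_mul_Bpoly_pow_mem_supported d hm _) hεi
        le_rfl, zero_smul, zero_smul, mul_zero]

theorem mk_monomial_eq_expansion (k : ℕ) :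
    ∀ m : Fin N →₀ ℕ, (∀ j ∈ m.support, (j : ℕ) < k) →
      mkD (monomial m 1) = expansion d (monomial m 1) := by
  induction k using Nat.strong_induction_on with
  | _ k ih =>
    intro m hm
    rcases m.support.eq_empty_or_nonempty with h | h
    · rw [Finsupp.support_eq_empty.1 h, ← one_def, map_one, expansion_one]
    · set i := m.support.max' h
      have hle : ∀ j ∈ m.support, j ≤ i := fun j hj => m.support.le_max' j hj
      have hmi : m i ≠ 0 := Finsupp.mem_support_iff.1 (m.support.max'_mem h)
      rw [mk_monomial_of_ne_zero d hmi, expansion_monomial d hle hmi]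
      congr 1
      refine linearMap_apply_eq_of_forall_monomial (f := (Ideal.Quotient.mkₐ A _).toLinearMap)
        fun m' hm' => ih i (hm i (m.support.max'_mem h)) m' fun j hj => ?_
      exact support_subset_of_mem_supported
        (monomial_erase_mul_Bpoly_pow_mem_supported d hle _) hm' hj

theorem mk_eq_expansion (P : MvPolynomial (Fin N) A) : mkD P = expansion d P :=
  linearMap_apply_eq_of_forall_monomial (f := (Ideal.Quotient.mkₐ A _).toLinearMap)
    fun m _ => mk_monomial_eq_expansion d N m fun j _ => j.isLt

end Expansion

theorem Tcoef_spec_general {A : Type*} [CommRing A] {N : ℕ}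
    (d : Fin N → Fin N → A) :
    (∀ P : MvPolynomial (Fin N) A,
        Ideal.Quotient.mk (Ideal.span (Set.range (Qrel d))) P
          = ∑ ε : Fin N → Bool, Tcoef d ε P • xPowD d ε) ∧
    (∀ ε₁ ε₂ : Fin N → Bool,
        xPowD d ε₁ * xPowD d ε₂
          = ∑ ε : Fin N → Bool, Tcoef d ε (XPow ε₁ * XPow ε₂) • xPowD d ε) := by
  have key (P : MvPolynomial (Fin N) A) :
      Ideal.Quotient.mk _ P = ∑ ε : Fin N → Bool, Tcoef d ε P • xPowD d ε := by
    rw [mk_eq_expansion, expansion_apply]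
  refine ⟨key, fun ε₁ ε₂ => ?_⟩
  rw [xPowD_eq_mk_XPow, xPowD_eq_mk_XPow, ← map_mul]
  exact key _

/-- For every polynomial `P`, the coordinates of the image of `P` in `𝒜_D` on the
basis `{x^ε}` are given by `T^ε(P)`; in particular the structure constants of `𝒜_D`
are `q_{ε₁,ε₂}^ε = T^ε(X^{ε₁}·X^{ε₂})`. -/
theorem Tcoef_spec {A : Type*} [CommRing A] {N : ℕ} (hN : 1 ≤ N)
    (d : Fin N → Fin N → A) :
    (∀ P : MvPolynomial (Fin N) A,
        Ideal.Quotient.mk (Ideal.span (Set.range (Qrel d))) P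
          = ∑ ε : Fin N → Bool, Tcoef d ε P • xPowD d ε) ∧
    (∀ ε₁ ε₂ : Fin N → Bool,
        xPowD d ε₁ * xPowD d ε₂
          = ∑ ε : Fin N → Bool, Tcoef d ε (XPow ε₁ * XPow ε₂) • xPowD d ε) :=
  Tcoef_spec_general d
end

section
/- If u, v ∈ H satisfy u² = u, v² = v and uvu = vuv, then for all x, y ∈ A: h_u(x)·h_v(xy)·h_u(y) = h_v(y)·h_u(xy)·h_v(x). -/
/-!
For an idempotent `u` the map `x ↦ h_u(x)` is multiplicative, so
`h_u(x) h_v(z) h_u(y) = h_u(xy) + (z - 1) h_u(x) v h_u(y)`, and with `z = xy` both sides of the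
relation take this form. Now `h_u(xy) - h_v(xy) = (xy - 1)(u - v)`, while expanding shows
`h_u(x) v h_u(y) - h_v(y) u h_v(x) = v - u` as soon as `uvu = vuv`.
-/

/-- `h_u(x) = 1 + (x - 1)·u` in an associative unital `A`-algebra `H`. -/
def heckeFactor {A H : Type*} [CommRing A] [Ring H] [Algebra A H] (u : H) (x : A) : H :=
  1 + (x - 1) • u

section

variable {A H : Type*} [CommRing A] [Ring H] [Algebra A H]

theorem heckeFactor_mul_mul_heckeFactor (u w : H) (x y : A) :
    heckeFactor u x * w * heckeFactor u y =
      w + (x - 1) • (u * w) + (y - 1) • (w * u) + ((x - 1) * (y - 1)) • (u * w * u) := by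
  simp only [heckeFactor, add_mul, mul_add, one_mul, mul_one, smul_mul_assoc, mul_smul_comm]
  module

theorem IsIdempotentElem.heckeFactor_mul_heckeFactor {u : H} (hu : IsIdempotentElem u)
    (x y : A) : heckeFactor u x * heckeFactor u y = heckeFactor u (x * y) := by
  rw [← mul_one (heckeFactor u x), heckeFactor_mul_mul_heckeFactor, mul_one, one_mul, hu.eq,
    heckeFactor]
  module

theorem IsIdempotentElem.heckeFactor_mul_heckeFactor_mul_heckeFactor {u : H}
    (hu : IsIdempotentElem u) (v : H) (x y z : A) :
    heckeFactor u x * heckeFactor v z * heckeFactor u y =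
      heckeFactor u (x * y) + (z - 1) • (heckeFactor u x * v * heckeFactor u y) := by
  rw [show heckeFactor v z = 1 + (z - 1) • v from rfl, mul_add, mul_one, add_mul,
    hu.heckeFactor_mul_heckeFactor, mul_smul_comm, smul_mul_assoc]

end

/-- Yang–Baxter type relation for a pair of idempotents satisfying the braid relation
of order `3` (i.e. `uvu = vuv`): for all `x y : A`,
`h_u(x)·h_v(xy)·h_u(y) = h_v(y)·h_u(xy)·h_v(x)`. -/
theorem yangBaxter_order_three {A H : Type*} [CommRing A] [Ring H] [Algebra A H]
    (u v : H) (hu : u ^ 2 = u) (hv : v ^ 2 = v) (hbraid : u * v * u = v * u * v)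
    (x y : A) :
    heckeFactor u x * heckeFactor v (x * y) * heckeFactor u y
      = heckeFactor v y * heckeFactor u (x * y) * heckeFactor v x := by
  have hu : IsIdempotentElem u := (sq u).symm.trans hu
  have hv : IsIdempotentElem v := (sq v).symm.trans hv
  rw [hu.heckeFactor_mul_heckeFactor_mul_heckeFactor,
    hv.heckeFactor_mul_heckeFactor_mul_heckeFactor, heckeFactor_mul_mul_heckeFactor, heckeFactor_mul_mul_heckeFactor, hbraid, mul_comm y x]
  simp only [heckeFactor]
  module
end

section
/- If u, v ∈ H satisfy u² = u, v² = v and uvuv = vuvu, then for all x, y ∈ A: h_u(x)·h_v(xy)·h_u(xy²)·h_v(y) = h_v(y)·h_u(xy²)·h_v(xy)·h_u(x). -/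
theorem one_add_smul_mul_four_eq_of_isIdempotentElem {R H : Type*} [CommRing R] [Ring H]
    [Algebra R H] {u v : H} (hu : IsIdempotentElem u) (hv : IsIdempotentElem v)
    (a b c d : R) :
    (1 + a • u) * (1 + b • v) * (1 + c • u) * (1 + d • v)
      = 1 + (a + c + a * c) • u + (b + d + b * d) • v
        + (a * b + a * d + c * d + a * b * d + a * c * d) • (u * v) + (b * c) • (v * u)
        + (a * b * c) • (u * v * u) + (b * c * d) • (v * u * v)
        + (a * b * c * d) • (u * v * u * v) := by
  simp only [mul_add, add_mul, one_mul, mul_one, smul_mul_assoc, mul_smul_comm,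
    mul_assoc, hu.eq, hv.eq]
  match_scalars <;> ring

theorem isIdempotentElem_of_sq_eq {M : Type*} [Monoid M] {p : M} (h : p ^ 2 = p) :
    IsIdempotentElem p := by
  rwa [IsIdempotentElem, ← sq]

/-- Yang–Baxter type relation for a pair of idempotents satisfying the braid relation
of order `4` (i.e. `uvuv = vuvu`): for all `x y : A`,
`h_u(x)·h_v(xy)·h_u(xy²)·h_v(y) = h_v(y)·h_u(xy²)·h_v(xy)·h_u(x)`. -/
theorem yangBaxter_order_four {A H : Type*} [CommRing A] [Ring H] [Algebra A H]
    (u v : H) (hu : u ^ 2 = u) (hv : v ^ 2 = v)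
    (hbraid : u * v * u * v = v * u * v * u) (x y : A) :
    heckeFactor u x * heckeFactor v (x * y) * heckeFactor u (x * y ^ 2) * heckeFactor v y
      = heckeFactor v y * heckeFactor u (x * y ^ 2) * heckeFactor v (x * y) *
          heckeFactor u x := by
  have hu' := isIdempotentElem_of_sq_eq hu
  have hv' := isIdempotentElem_of_sq_eq hv
  simp only [heckeFactor]
  rw [one_add_smul_mul_four_eq_of_isIdempotentElem hu' hv',
    one_add_smul_mul_four_eq_of_isIdempotentElem hv' hu', ← hbraid]
  match_scalars <;> ring
end

section
/- If u, v ∈ H satisfy u² = u, v² = v and uvuvuv = vuvuvu, then for all x, y ∈ A: h_u(x)·h_v(x³y)·h_u(x²y)·h_v(x³y²)·h_u(xy)·h_v(y) = h_v(y)·h_u(xy)·h_v(x³y²)·h_u(x²y)·h_v(x³y)·h_u(x). -/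
/-- Yang–Baxter type relation for a pair of idempotents satisfying the braid relation
of order `6` (i.e. `uvuvuv = vuvuvu`): for all `x y : A`,
`h_u(x)·h_v(x³y)·h_u(x²y)·h_v(x³y²)·h_u(xy)·h_v(y)
  = h_v(y)·h_u(xy)·h_v(x³y²)·h_u(x²y)·h_v(x³y)·h_u(x)`. -/
theorem yangBaxter_order_six {A H : Type*} [CommRing A] [Ring H] [Algebra A H]
    (u v : H) (hu : u ^ 2 = u) (hv : v ^ 2 = v)
    (hbraid : u * v * u * v * u * v = v * u * v * u * v * u) (x y : A) :
    heckeFactor u x * heckeFactor v (x ^ 3 * y) * heckeFactor u (x ^ 2 * y) *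
        heckeFactor v (x ^ 3 * y ^ 2) * heckeFactor u (x * y) * heckeFactor v y
      = heckeFactor v y * heckeFactor u (x * y) * heckeFactor v (x ^ 3 * y ^ 2) *
          heckeFactor u (x ^ 2 * y) * heckeFactor v (x ^ 3 * y) * heckeFactor u x := by
  have hu' : IsIdempotentElem u := by rw [IsIdempotentElem, ← sq, hu]
  have hv' : IsIdempotentElem v := by rw [IsIdempotentElem, ← sq, hv]
  have hbraid' : u * (v * (u * (v * (u * v)))) = v * (u * (v * (u * (v * u)))) := by
    simpa only [mul_assoc] using hbraid
  -- Idempotence collapses every word in `u, v` to an alternating one, and the braid relation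
  -- identifies the two alternating words of length 6; what is left is an identity in `A`.
  simp only [heckeFactor, add_mul, mul_add, one_mul, mul_one, smul_mul_assoc, mul_smul_comm,
    mul_assoc, hu'.eq, hv'.eq, hbraid']
  match_scalars <;> ring
end
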